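/- arXiv:0706.1837 — 6 statements merged into one kernel-verified Lean document; each statement's English description precedes it below -/
import Mathlib

section
/- If r is a subgeometric sequence and R(n) = ∑_{k=0}^{n-1} r(k) for n ≥ 1 with R(0) = 1, then r(n)/R(n) → 0 as n → ∞. -/
open Filter Real Finset

/-- A sequence `r : ℕ → ℝ` is subgeometric if `r n ≥ 1`, `r` is non-decreasing, and
`n ↦ log (r n) / n` is non-increasing (for `n ≥ 1`) with limit `0`. -/
def Subgeometric (r : ℕ → ℝ) : Prop :=
  (∀ n, 1 ≤ r n) ∧ Monotone r ∧
  (∀ m n : ℕ, 1 ≤ m → m ≤ n → Real.log (r n) / n ≤ Real.log (r m) / m) ∧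
  Tendsto (fun n : ℕ => Real.log (r n) / n) atTop (nhds 0)

/-!
The `K` terms `r (n - K), …, r (n - 1)` of `R n` are each at least `r (n - K)`, so
`r n / R n ≤ (r n / r (n - K)) / K`. Since `log (r m) / m` is non-increasing,
`log r (m + K) ≤ (m + K) · log (r m) / m = log r m + K · log (r m) / m`, and the last term tends
to `0`; hence `r (m + K) / r m → 1` for every fixed `K`, and `limsup r n / R n ≤ 1 / K`.
-/

open Topology

theorem Monotone.nsmul_le_sum_range_add {M : Type*} [AddCommMonoid M] [PartialOrder M]
    [IsOrderedAddMonoid M] {r : ℕ → M} (hr : Monotone r) (h0 : ∀ n, 0 ≤ r n) (n K : ℕ) :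
    K • r n ≤ ∑ k ∈ range (n + K), r k := by
  rw [sum_range_add]
  calc K • r n ≤ ∑ j ∈ range K, r (n + j) := by
        simpa using card_nsmul_le_sum (range K) (fun j ↦ r (n + j)) (r n)
          fun j _ ↦ hr (Nat.le_add_right n j)
    _ ≤ _ := le_add_of_nonneg_left (sum_nonneg fun k _ ↦ h0 k)

namespace Subgeometric

theorem pos {r : ℕ → ℝ} (hr : Subgeometric r) (n : ℕ) : 0 < r n :=
  one_pos.trans_le (hr.1 n)

theorem log_add_sub_log_le {r : ℕ → ℝ} (hr : Subgeometric r) {n : ℕ} (hn : 1 ≤ n) (k : ℕ) :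
    log (r (n + k)) - log (r n) ≤ k * (log (r n) / n) := by
  have hn' : (0 : ℝ) < n := by exact_mod_cast hn
  have h := hr.2.2.1 n (n + k) hn (Nat.le_add_right n k)
  rw [div_le_iff₀ (by positivity)] at h
  calc log (r (n + k)) - log (r n) ≤ log (r n) / n * (n + k) - log (r n) := by
        push_cast at h; linarith
    _ = k * (log (r n) / n) := by field_simp; ring

theorem tendsto_div_shift {r : ℕ → ℝ} (hr : Subgeometric r) (k : ℕ) :
    Tendsto (fun n ↦ r (n + k) / r n) atTop (𝓝 1) := by
  have hlog : Tendsto (fun n ↦ log (r (n + k)) - log (r n)) atTop (𝓝 0) := by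
    have hup : Tendsto (fun n : ℕ ↦ (k : ℝ) * (log (r n) / n)) atTop (𝓝 0) := by
      simpa using hr.2.2.2.const_mul (k : ℝ)
    refine tendsto_of_tendsto_of_tendsto_of_le_of_le' tendsto_const_nhds hup
      (Eventually.of_forall fun n ↦ ?_) ?_
    · exact sub_nonneg.2 (log_le_log (hr.pos n) (hr.2.1 (Nat.le_add_right n k)))
    · filter_upwards [eventually_ge_atTop 1] with n hn using hr.log_add_sub_log_le hn k
  have hexp := (continuous_exp.tendsto 0).comp hlog
  rw [exp_zero] at hexp
  refine hexp.congr fun n ↦ ?_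
  simp [exp_sub, exp_log (hr.pos _)]

theorem eventually_div_sum_range_lt {r : ℕ → ℝ} (hr : Subgeometric r) {K : ℕ} (hK : 0 < K) :
    ∀ᶠ n in atTop, r n / ∑ k ∈ range n, r k < 2 / K := by
  have hK' : (0 : ℝ) < K := by exact_mod_cast hK
  rw [← map_add_atTop_eq_nat K, eventually_map]
  filter_upwards [(hr.tendsto_div_shift K).eventually (gt_mem_nhds one_lt_two)] with n hn
  have hsum : K * r n ≤ ∑ k ∈ range (n + K), r k := by
    simpa using hr.2.1.nsmul_le_sum_range_add (fun n ↦ (hr.pos n).le) n K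
  calc r (n + K) / ∑ k ∈ range (n + K), r k ≤ r (n + K) / (K * r n) :=
        div_le_div_of_nonneg_left (hr.pos _).le (mul_pos hK' (hr.pos n)) hsum
    _ = r (n + K) / r n / K := by rw [div_div, mul_comm]
    _ < 2 / K := by gcongr

theorem tendsto_div_sum_range {r : ℕ → ℝ} (hr : Subgeometric r) :
    Tendsto (fun n ↦ r n / ∑ k ∈ range n, r k) atTop (𝓝 0) := by
  refine tendsto_order.2 ⟨fun a ha ↦ Eventually.of_forall fun n ↦ ?_, fun ε hε ↦ ?_⟩
  · exact ha.trans_le (div_nonneg (hr.pos n).le (sum_nonneg fun k _ ↦ (hr.pos k).le))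
  obtain ⟨K, hK⟩ := exists_nat_gt (2 / ε)
  have hK0 : (0 : ℝ) < K := (div_pos two_pos hε).trans hK
  filter_upwards [hr.eventually_div_sum_range_lt (K := K) (by exact_mod_cast hK0)] with n hn
  exact hn.trans ((div_lt_iff₀ hK0).2 (by rwa [div_lt_iff₀ hε, mul_comm] at hK))

end Subgeometric

theorem subgeometric_ratio_partial_sum_tendsto_zero_general (r : ℕ → ℝ) (hr : Subgeometric r)
    (R : ℕ → ℝ) (hR : ∀ n : ℕ, 1 ≤ n → R n = ∑ k ∈ Finset.range n, r k) :
    Tendsto (fun n : ℕ => r n / R n) atTop (nhds 0) := by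
  refine hr.tendsto_div_sum_range.congr' ?_
  filter_upwards [eventually_ge_atTop 1] with n hn
  rw [hR n hn]

theorem subgeometric_ratio_partial_sum_tendsto_zero (r : ℕ → ℝ) (hr : Subgeometric r)
    (R : ℕ → ℝ) (hR0 : R 0 = 1) (hR : ∀ n : ℕ, 1 ≤ n → R n = ∑ k ∈ Finset.range n, r k) :
    Tendsto (fun n : ℕ => r n / R n) atTop (nhds 0) :=
  subgeometric_ratio_partial_sum_tendsto_zero_general r hr R hR
end

section
/- If φ(v) = c(1 + log v)^α with c ∈ (0,1] and α > 0, and r_φ(z) = φ(H_φ⁻¹(z)) with H_φ(v) = ∫_1^v dx/φ(x), then r_φ(n)/(log n)^α converges to a positive finite constant as n → ∞ (i.e., r_φ(n) ≍ (log n)^α). -/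
/-!
Since `φ` is increasing on `[1, ∞)`, comparing `1/φ` with its values at the endpoints
gives `(v - 1)/φ(v) ≤ H(v) ≤ (v - 1)/c`. As `log φ(v) = log c + α log (1 + log v)` is
`o(log v)`, this forces `log H(v) ~ log v`. The upper bound also gives
`H⁻¹(z) ≥ 1 + cz → ∞`, so substituting `v = H⁻¹(z)` yields `1 + log H⁻¹(z) ~ log z`,
whence `r(z) = c (1 + log H⁻¹(z))^α ~ c (log z)^α`.
-/

open Set Filter Real

open Topology intervalIntegral

section MonotoneIntegrand

variable {φ : ℝ → ℝ} {a b : ℝ}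

lemma antitoneOn_one_div_of_monotoneOn (hpos : 0 < φ a) (hmono : MonotoneOn φ (Icc a b)) :
    AntitoneOn (fun x => 1 / φ x) (Icc a b) := fun _ hx _ hy hxy =>
  one_div_le_one_div_of_le (hpos.trans_le (hmono ⟨le_rfl, hx.1.trans hx.2⟩ hx hx.1))
    (hmono hx hy hxy)

lemma integral_one_div_le_of_monotoneOn (hab : a ≤ b) (hpos : 0 < φ a)
    (hmono : MonotoneOn φ (Icc a b)) :
    ∫ x in a..b, 1 / φ x ≤ (b - a) / φ a := by
  have hanti := antitoneOn_one_div_of_monotoneOn hpos hmono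
  calc ∫ x in a..b, 1 / φ x ≤ ∫ _ in a..b, 1 / φ a :=
        integral_mono_on hab (uIcc_of_le hab ▸ hanti).intervalIntegrable
          intervalIntegrable_const
          fun x hx => hanti ⟨le_rfl, hab⟩ hx hx.1
    _ = (b - a) / φ a := by rw [integral_const, smul_eq_mul, mul_one_div]

lemma div_le_integral_one_div_of_monotoneOn (hab : a ≤ b) (hpos : 0 < φ a)
    (hmono : MonotoneOn φ (Icc a b)) :
    (b - a) / φ b ≤ ∫ x in a..b, 1 / φ x := by
  have hanti := antitoneOn_one_div_of_monotoneOn hpos hmono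
  calc (b - a) / φ b = ∫ _ in a..b, 1 / φ b := by rw [integral_const, smul_eq_mul, mul_one_div]
    _ ≤ ∫ x in a..b, 1 / φ x :=
        integral_mono_on hab intervalIntegrable_const
          (uIcc_of_le hab ▸ hanti).intervalIntegrable
          fun x hx => hanti hx ⟨hab, le_rfl⟩ hx.2

end MonotoneIntegrand

lemma tendsto_log_one_add_log_div_log :
    Tendsto (fun v => log (1 + log v) / log v) atTop (𝓝 0) := by
  have := (tendsto_pow_log_div_mul_add_atTop 1 (-1) 1 one_ne_zero).comp
    (tendsto_atTop_add_const_left _ 1 tendsto_log_atTop)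
  refine this.congr fun v => ?_
  simp

noncomputable def logPow (c α v : ℝ) : ℝ := c * (1 + log v) ^ α

section LogPow

variable {c α v : ℝ}

lemma one_le_one_add_log (hv : 1 ≤ v) : 1 ≤ 1 + log v := by
  linarith [log_nonneg hv]

lemma logPow_one : logPow c α 1 = c := by simp [logPow]

lemma logPow_pos (hc : 0 < c) (hv : 1 ≤ v) : 0 < logPow c α v :=
  mul_pos hc (rpow_pos_of_pos (one_pos.trans_le (one_le_one_add_log hv)) α)

lemma log_logPow (hc : 0 < c) (hv : 1 ≤ v) :
    log (logPow c α v) = log c + α * log (1 + log v) := by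
  have hpos := one_pos.trans_le (one_le_one_add_log hv)
  rw [logPow, log_mul hc.ne' (rpow_pos_of_pos hpos α).ne', log_rpow hpos]

lemma monotoneOn_logPow (hc : 0 ≤ c) (hα : 0 ≤ α) : MonotoneOn (logPow c α) (Ici 1) :=
  fun x hx y _ hxy => mul_le_mul_of_nonneg_left
    (rpow_le_rpow (by linarith [one_le_one_add_log hx])
      (by gcongr; exact one_pos.trans_le hx) hα) hc

lemma integral_one_div_logPow_le (hc : 0 < c) (hα : 0 ≤ α) (hv : 1 ≤ v) :
    ∫ x in (1:ℝ)..v, 1 / logPow c α x ≤ (v - 1) / c := by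
  simpa only [logPow_one] using integral_one_div_le_of_monotoneOn hv
    (logPow_pos hc le_rfl) ((monotoneOn_logPow hc.le hα).mono Icc_subset_Ici_self)

lemma div_logPow_le_integral_one_div_logPow (hc : 0 < c) (hα : 0 ≤ α) (hv : 1 ≤ v) :
    (v - 1) / logPow c α v ≤ ∫ x in (1:ℝ)..v, 1 / logPow c α x :=
  div_le_integral_one_div_of_monotoneOn hv
    (logPow_pos hc le_rfl) ((monotoneOn_logPow hc.le hα).mono Icc_subset_Ici_self)

lemma log_integral_one_div_logPow_le (hc : 0 < c) (hα : 0 ≤ α) (hv : 2 ≤ v) :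
    log (∫ x in (1:ℝ)..v, 1 / logPow c α x) ≤ log v - log c := by
  have hpos : 0 < (v - 1) / logPow c α v := div_pos (by linarith) (logPow_pos hc (by linarith))
  calc log (∫ x in (1:ℝ)..v, 1 / logPow c α x) ≤ log ((v - 1) / c) :=
        log_le_log (hpos.trans_le (div_logPow_le_integral_one_div_logPow hc hα (by linarith)))
          (integral_one_div_logPow_le hc hα (by linarith))
    _ ≤ log (v / c) := log_le_log (div_pos (by linarith) hc) (by gcongr; linarith)
    _ = log v - log c := log_div (by positivity) hc.ne'

lemma sub_log_le_log_integral_one_div_logPow (hc : 0 < c) (hα : 0 ≤ α) (hv : 2 ≤ v) :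
    log v - log 2 - log c - α * log (1 + log v) ≤
      log (∫ x in (1:ℝ)..v, 1 / logPow c α x) := by
  have hφ := logPow_pos (α := α) hc (by linarith : 1 ≤ v)
  calc log v - log 2 - log c - α * log (1 + log v) = log (v / 2) - log (logPow c α v) := by
        rw [log_div (by positivity) two_ne_zero, log_logPow hc (by linarith)]; ring
    _ = log (v / 2 / logPow c α v) := (log_div (by positivity) hφ.ne').symm
    _ ≤ log ((v - 1) / logPow c α v) := log_le_log (by positivity) (by gcongr; linarith)
    _ ≤ log (∫ x in (1:ℝ)..v, 1 / logPow c α x) :=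
        log_le_log (div_pos (by linarith) hφ)
          (div_logPow_le_integral_one_div_logPow hc hα (by linarith))

lemma tendsto_log_integral_one_div_logPow_div_log (hc : 0 < c) (hα : 0 ≤ α) :
    Tendsto (fun v => log (∫ x in (1:ℝ)..v, 1 / logPow c α x) / log v) atTop (𝓝 1) := by
  have hinv : Tendsto (fun v => (log v)⁻¹) atTop (𝓝 0) := tendsto_log_atTop.inv_tendsto_atTop
  have hlower : Tendsto
      (fun v => 1 - (log 2 + log c) * (log v)⁻¹ - α * (log (1 + log v) / log v))
      atTop (𝓝 1) := by
    simpa using ((hinv.const_mul _).const_sub 1).sub (tendsto_log_one_add_log_div_log.const_mul α)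
  have hupper : Tendsto (fun v => 1 - log c * (log v)⁻¹) atTop (𝓝 1) := by
    simpa using (hinv.const_mul (log c)).const_sub 1
  refine tendsto_of_tendsto_of_tendsto_of_le_of_le' hlower hupper ?_ ?_ <;>
    filter_upwards [eventually_ge_atTop 2] with v hv
  · have hlog := log_pos (by linarith : 1 < v)
    rw [le_div_iff₀ hlog]
    refine Eq.trans_le ?_ (sub_log_le_log_integral_one_div_logPow hc hα hv)
    field_simp
    ring
  · have hlog := log_pos (by linarith : 1 < v)
    rw [div_le_iff₀ hlog]
    refine (log_integral_one_div_logPow_le hc hα hv).trans_eq ?_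
    field_simp

lemma le_of_integral_one_div_logPow_eq {z : ℝ} (hc : 0 < c) (hα : 0 ≤ α) (hv : 1 ≤ v)
    (hz : ∫ x in (1:ℝ)..v, 1 / logPow c α x = z) : 1 + c * z ≤ v := by
  have := (integral_one_div_logPow_le hc hα hv).trans_eq' hz
  rw [le_div_iff₀ hc] at this
  linarith

end LogPow

theorem rphi_logarithmic_rate_general (c α : ℝ) (hc : c ∈ Ioc (0:ℝ) 1) (hα : 0 < α)
    (φ : ℝ → ℝ) (hφ : ∀ v : ℝ, φ v = c * (1 + Real.log v) ^ α)
    (H : ℝ → ℝ) (hH : ∀ v : ℝ, H v = ∫ x in (1:ℝ)..v, 1 / φ x)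
    (Hinv : ℝ → ℝ)
    (hinv_mem : ∀ z ∈ Ici (0:ℝ), Hinv z ∈ Ici (1:ℝ))
    (hinv_right : ∀ z ∈ Ici (0:ℝ), H (Hinv z) = z)
    (r : ℝ → ℝ) (hr : ∀ z : ℝ, r z = φ (Hinv z)) :
    ∃ L : ℝ, 0 < L ∧
      Tendsto (fun n : ℕ => r n / (Real.log n) ^ α) atTop (nhds L) := by
  obtain ⟨hc, -⟩ := hc
  obtain rfl : φ = logPow c α := funext hφ
  obtain rfl : H = fun v => ∫ x in (1:ℝ)..v, 1 / logPow c α x := funext hH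
  have hHinv : Tendsto Hinv atTop atTop := by
    refine tendsto_atTop_mono' _ ?_ (tendsto_atTop_add_const_left _ 1
      (tendsto_id.const_mul_atTop hc))
    filter_upwards [eventually_ge_atTop 0] with z hz
    exact le_of_integral_one_div_logPow_eq hc hα.le (hinv_mem z hz) (hinv_right z hz)
  have hlog : Tendsto (fun z => log (Hinv z) / log z) atTop (𝓝 1) := by
    have h := (tendsto_log_integral_one_div_logPow_div_log hc hα.le).comp hHinv |>.inv₀
      one_ne_zero
    rw [inv_one] at h
    refine h.congr' ?_
    filter_upwards [eventually_ge_atTop 0] with z hz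
    simp only [Function.comp_apply, hinv_right z hz, inv_div]
  have hratio : Tendsto (fun z => (1 + log (Hinv z)) / log z) atTop (𝓝 1) := by
    simpa [add_div] using tendsto_log_atTop.inv_tendsto_atTop.add hlog
  refine ⟨c, hc, ?_⟩
  have hrate : Tendsto (fun z : ℝ => r z / log z ^ α) atTop (𝓝 c) := by
    have h := (hratio.rpow_const (p := α) (Or.inl one_ne_zero)).const_mul c
    rw [one_rpow, mul_one] at h
    refine h.congr' ?_
    filter_upwards [eventually_gt_atTop 1, eventually_ge_atTop 0] with z hz hz0
    rw [div_rpow (zero_le_one.trans (one_le_one_add_log (hinv_mem z hz0))) (log_pos hz).le, hr,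
      logPow]
    ring
  exact hrate.comp tendsto_natCast_atTop_atTop

/-- Logarithmic rates: if `φ(v) = c(1 + log v)^α` with `c ∈ (0,1]`, `α > 0`, and
`r_φ(z) = φ(H_φ⁻¹(z))`, then `r_φ(n)/(log n)^α` converges to a positive finite limit. -/
theorem rphi_logarithmic_rate (c α : ℝ) (hc : c ∈ Ioc (0:ℝ) 1) (hα : 0 < α)
    (φ : ℝ → ℝ) (hφ : ∀ v : ℝ, φ v = c * (1 + Real.log v) ^ α)
    (H : ℝ → ℝ) (hH : ∀ v : ℝ, H v = ∫ x in (1:ℝ)..v, 1 / φ x)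
    (Hinv : ℝ → ℝ)
    (hinv_mem : ∀ z ∈ Ici (0:ℝ), Hinv z ∈ Ici (1:ℝ))
    (hinv_left : ∀ v ∈ Ici (1:ℝ), Hinv (H v) = v)
    (hinv_right : ∀ z ∈ Ici (0:ℝ), H (Hinv z) = z)
    (r : ℝ → ℝ) (hr : ∀ z : ℝ, r z = φ (Hinv z)) :
    ∃ L : ℝ, 0 < L ∧
      Tendsto (fun n : ℕ => r n / (Real.log n) ^ α) atTop (nhds L) :=
  rphi_logarithmic_rate_general c α hc hα φ hφ H hH Hinv hinv_mem hinv_right r hr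
end

section
/- Suppose φ : [1,∞) → (0,∞) is concave, differentiable, and φ(v) = c·v/(log v)^α for all v ≥ v₀, with c > 0, α > 0. Then with r_φ(z) = φ(H_φ⁻¹(z)), H_φ(v) = ∫_1^v dx/φ(x), there exist positive constants C₁, C₂ such that C₁ ≤ r_φ(n) · n^{α/(1+α)} · exp(−(c(1+α)n)^{1/(1+α)}) ≤ C₂ for all large n. -/
/-!
Beyond `v₀` the integral `H` is explicit: `H v = K + (log v)^{1+α} / D` with `D = c (1+α)`.
Hence for large `z` the point `w = H⁻¹(z)` satisfies `log w = (D (z - K))^{1/(1+α)}`, and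
`r(z) = φ(w) = c w / (log w)^α`. The normalised rate then factors as
`c · exp(log w - (D z)^{1/(1+α)}) · (z / (D (z - K)))^{α/(1+α)}`: the first exponent is bounded
by `(D |K|)^{1/(1+α)}` because `t ↦ t^p` is subadditive for `p ≤ 1`, and the ratio tends to `1/D`.
-/

open Set Filter Real

namespace Real

theorem abs_rpow_sub_rpow_le {a b p : ℝ} (ha : 0 ≤ a) (hb : 0 ≤ b) (hp₀ : 0 ≤ p) (hp₁ : p ≤ 1) :
    |a ^ p - b ^ p| ≤ |a - b| ^ p := by
  wlog hba : b ≤ a generalizing a b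
  · rw [abs_sub_comm, abs_sub_comm a]
    exact this hb ha (le_of_not_ge hba)
  have hmono : b ^ p ≤ a ^ p := rpow_le_rpow hb hba hp₀
  have hsub : a ^ p ≤ b ^ p + (a - b) ^ p := by
    simpa using rpow_add_le_add_rpow hb (sub_nonneg.2 hba) hp₀ hp₁
  rw [abs_of_nonneg (sub_nonneg.2 hmono), abs_of_nonneg (sub_nonneg.2 hba)]
  linarith

theorem integral_log_rpow_div {a b α : ℝ} (ha : 0 < a) (hb : 0 < b) (hα : 0 ≤ α) :
    ∫ x in a..b, log x ^ α / x = (log b ^ (α + 1) - log a ^ (α + 1)) / (α + 1) := by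
  have hpos : ∀ x ∈ uIcc a b, 0 < x := fun x hx => (lt_min ha hb).trans_le hx.1
  have := intervalIntegral.integral_comp_mul_deriv' (f := log) (g := fun t => t ^ α)
    (fun x hx => hasDerivAt_log (hpos x hx).ne')
    (continuousOn_inv₀.mono fun x hx => (hpos x hx).ne') (continuous_rpow_const hα).continuousOn
  simp only [Function.comp_def, ← div_eq_mul_inv] at this
  rw [this, integral_rpow (Or.inl (by linarith))]

end Real

section IntegralIci

variable {f : ℝ → ℝ} {a : ℝ}

theorem ContinuousOn.intervalIntegrable_of_Ici (hf : ContinuousOn f (Ici a)) {u v : ℝ}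
    (hu : a ≤ u) (hv : a ≤ v) : IntervalIntegrable f MeasureTheory.volume u v :=
  (hf.mono fun _ hx => (le_min hu hv).trans hx.1).intervalIntegrable

theorem ContinuousOn.integral_sub_integral_of_Ici (hf : ContinuousOn f (Ici a)) {u v : ℝ}
    (hu : a ≤ u) (hv : a ≤ v) :
    (∫ x in a..v, f x) - ∫ x in a..u, f x = ∫ x in u..v, f x :=
  intervalIntegral.integral_interval_sub_left (hf.intervalIntegrable_of_Ici le_rfl hv)
    (hf.intervalIntegrable_of_Ici le_rfl hu)

theorem ContinuousOn.monotoneOn_integral_of_nonneg (hf : ContinuousOn f (Ici a))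
    (hf₀ : ∀ x ∈ Ici a, 0 ≤ f x) : MonotoneOn (fun v => ∫ x in a..v, f x) (Ici a) := by
  intro u hu v hv huv
  have : 0 ≤ ∫ x in u..v, f x :=
    intervalIntegral.integral_nonneg huv fun x hx => hf₀ x (hu.out.trans hx.1)
  linarith [hf.integral_sub_integral_of_Ici hu hv]

end IntegralIci

theorem exists_integral_one_div_eq_log_rpow {φ : ℝ → ℝ} {c α v₀ : ℝ} (hα : 0 ≤ α) (hv₀ : 1 ≤ v₀)
    (hcont : ContinuousOn (fun x => 1 / φ x) (Ici 1))
    (hφ : ∀ v, v₀ ≤ v → φ v = c * v / log v ^ α) :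
    ∃ K, ∀ v, v₀ ≤ v → ∫ x in 1..v, 1 / φ x = K + log v ^ (1 + α) / (c * (1 + α)) := by
  refine ⟨(∫ x in 1..v₀, 1 / φ x) - log v₀ ^ (1 + α) / (c * (1 + α)), fun v hv => ?_⟩
  have hv₀v : ∫ x in v₀..v, 1 / φ x = ∫ x in v₀..v, c⁻¹ * (log x ^ α / x) := by
    refine intervalIntegral.integral_congr fun x hx => ?_
    rw [uIcc_of_le hv] at hx
    simp only [hφ x hx.1, one_div_div]
    ring
  have hsub := hcont.integral_sub_integral_of_Ici hv₀ (hv₀.trans hv)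
  rw [hv₀v, intervalIntegral.integral_const_mul,
    integral_log_rpow_div (by linarith) (by linarith) hα] at hsub
  rw [add_comm α] at hsub
  field_simp at hsub ⊢
  linear_combination hsub

theorem log_eq_rpow_of_eq_add_log_rpow {w z K D α : ℝ} (hD : 0 < D) (hα : 0 < α) (hw : 1 ≤ w)
    (hz : z = K + log w ^ (1 + α) / D) : log w = (D * (z - K)) ^ (1 / (1 + α)) := by
  have : D * (z - K) = log w ^ (1 + α) := by
    rw [hz]
    field_simp
    ring
  rw [this, one_div, rpow_rpow_inv (log_nonneg hw) (by positivity)]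

theorem mul_div_log_rpow_mul_rpow_mul_exp_eq {c w z K D α : ℝ} (hD : 0 < D)
    (hw : 0 < w) (hz : 0 < z) (hzK : 0 < z - K) (hlog : log w = (D * (z - K)) ^ (1 / (1 + α))) :
    c * w / log w ^ α * z ^ (α / (1 + α)) * exp (-(D * z) ^ (1 / (1 + α))) =
      c * exp (log w - (D * z) ^ (1 / (1 + α))) * (z / (D * (z - K))) ^ (α / (1 + α)) := by
  have hlogα : log w ^ α = (D * (z - K)) ^ (α / (1 + α)) := by
    rw [hlog, ← rpow_mul (by positivity)]
    ring_nf
  rw [hlogα, exp_sub, exp_log hw, exp_neg, div_rpow hz.le (by positivity)]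
  field_simp

theorem exists_bounds_of_log_eq_rpow {c D α K : ℝ} (hc : 0 < c) (hD : 0 < D) (hα : 0 < α)
    {w : ℝ → ℝ} (hw : ∀ᶠ z in atTop, 0 < w z ∧ log (w z) = (D * (z - K)) ^ (1 / (1 + α))) :
    ∃ C₁ C₂ : ℝ, 0 < C₁ ∧ 0 < C₂ ∧ ∀ᶠ z in atTop,
      C₁ ≤ c * w z / log (w z) ^ α * z ^ (α / (1 + α)) * exp (-(D * z) ^ (1 / (1 + α))) ∧
      c * w z / log (w z) ^ α * z ^ (α / (1 + α)) * exp (-(D * z) ^ (1 / (1 + α))) ≤ C₂ := by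
  set β := 1 / (1 + α)
  set B := (D * |K|) ^ β
  refine ⟨c * exp (-B) * (1 / (2 * D)) ^ (α / (1 + α)), c * exp B * (2 / D) ^ (α / (1 + α)),
    by positivity, by positivity, ?_⟩
  filter_upwards [hw, eventually_ge_atTop (2 * |K| + 1)] with z ⟨hw₀, hlog⟩ hz
  have hzK : z / 2 ≤ z - K ∧ z - K ≤ 2 * z := by
    constructor <;> linarith [le_abs_self K, neg_abs_le K]
  have hz₀ : 0 < z := by linarith [abs_nonneg K]
  have hzK₀ : 0 < z - K := by linarith
  have hβ₀ : 0 ≤ β := by positivity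
  have hβ₁ : β ≤ 1 := by rw [div_le_one (by positivity)]; linarith
  have hshift : |log (w z) - (D * z) ^ β| ≤ B := by
    have := abs_rpow_sub_rpow_le (mul_pos hD hzK₀).le (mul_pos hD hz₀).le hβ₀ hβ₁
    rwa [← hlog, ← mul_sub, sub_sub_cancel_left, abs_mul, abs_neg, abs_of_pos hD] at this
  have hratio : 1 / (2 * D) ≤ z / (D * (z - K)) ∧ z / (D * (z - K)) ≤ 2 / D := by
    constructor
    · rw [div_le_div_iff₀ (by positivity) (by positivity)]
      nlinarith
    · rw [div_le_div_iff₀ (by positivity) hD]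
      nlinarith
  rw [mul_div_log_rpow_mul_rpow_mul_exp_eq hD hw₀ hz₀ hzK₀ hlog]
  obtain ⟨hshift₁, hshift₂⟩ := abs_le.1 hshift
  constructor
  · gcongr c * exp ?_ * ?_ ^ _
    exact hratio.1
  · gcongr c * exp ?_ * ?_ ^ _
    exact hratio.2

theorem rphi_subexponential_rate_general (c α v₀ : ℝ) (hc : 0 < c) (hα : 0 < α) (hv₀ : 1 < v₀)
    (φ : ℝ → ℝ)
    (hpos : ∀ x ∈ Ici (1:ℝ), 0 < φ x)
    (hdiff : DifferentiableOn ℝ φ (Ici 1))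
    (hφ : ∀ v : ℝ, v₀ ≤ v → φ v = c * v / (Real.log v) ^ α)
    (H : ℝ → ℝ) (hH : ∀ v : ℝ, H v = ∫ x in (1:ℝ)..v, 1 / φ x)
    (Hinv : ℝ → ℝ)
    (hinv_mem : ∀ z ∈ Ici (0:ℝ), Hinv z ∈ Ici (1:ℝ))
    (hinv_right : ∀ z ∈ Ici (0:ℝ), H (Hinv z) = z)
    (r : ℝ → ℝ) (hr : ∀ z : ℝ, r z = φ (Hinv z)) :
    ∃ C₁ C₂ : ℝ, 0 < C₁ ∧ 0 < C₂ ∧ ∀ᶠ n : ℕ in atTop,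
      C₁ ≤ r n * (n : ℝ) ^ (α / (1 + α)) * Real.exp (-(c * (1 + α) * n) ^ (1 / (1 + α))) ∧
      r n * (n : ℝ) ^ (α / (1 + α)) * Real.exp (-(c * (1 + α) * n) ^ (1 / (1 + α))) ≤ C₂ := by
  have hcont : ContinuousOn (fun x => 1 / φ x) (Ici 1) :=
    continuousOn_const.div hdiff.continuousOn fun x hx => (hpos x hx).ne'
  obtain ⟨K, hK⟩ := exists_integral_one_div_eq_log_rpow hα.le hv₀.le hcont hφ
  have hmono : MonotoneOn H (Ici 1) := by
    simpa only [← hH] using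
      hcont.monotoneOn_integral_of_nonneg fun x hx => (one_div_pos.2 (hpos x hx)).le
  have hlog : ∀ᶠ z in atTop,
      v₀ ≤ Hinv z ∧ log (Hinv z) = (c * (1 + α) * (z - K)) ^ (1 / (1 + α)) := by
    filter_upwards [eventually_gt_atTop (max (H v₀) 0)] with z hz
    have hz₀ : z ∈ Ici 0 := (le_max_right _ _).trans hz.le
    have hv : v₀ ≤ Hinv z := by
      by_contra! hlt
      have := hmono (hinv_mem z hz₀) (mem_Ici.2 hv₀.le) hlt.le
      rw [hinv_right z hz₀] at this
      exact (le_max_left _ _).not_gt (hz.trans_le this)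
    refine ⟨hv, log_eq_rpow_of_eq_add_log_rpow (by positivity) hα (hinv_mem z hz₀) ?_⟩
    rw [← hK _ hv, ← hH, hinv_right z hz₀]
  obtain ⟨C₁, C₂, hC₁, hC₂, hbound⟩ := exists_bounds_of_log_eq_rpow hc (by positivity) hα
    (hlog.mono fun z hz => ⟨by linarith [hz.1], hz.2⟩)
  refine ⟨C₁, C₂, hC₁, hC₂, ?_⟩
  filter_upwards [tendsto_natCast_atTop_atTop.eventually (hbound.and hlog)] with n ⟨hb, hv, _⟩
  rwa [hr, hφ _ hv]

/-- Subexponential rates: if `φ` is concave, differentiable, positive, and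
`φ(v) = c·v/(log v)^α` for `v ≥ v₀` with `c, α > 0`, then with `r_φ(z) = φ(H_φ⁻¹(z))`,
`r_φ(n) · n^{α/(1+α)} · exp(−(c(1+α)n)^{1/(1+α)})` is bounded above and below by positive
constants for all large `n`. -/
theorem rphi_subexponential_rate (c α v₀ : ℝ) (hc : 0 < c) (hα : 0 < α) (hv₀ : 1 < v₀)
    (φ : ℝ → ℝ)
    (hpos : ∀ x ∈ Ici (1:ℝ), 0 < φ x)
    (hconc : ConcaveOn ℝ (Ici 1) φ)
    (hmono : MonotoneOn φ (Ici 1))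
    (hdiff : DifferentiableOn ℝ φ (Ici 1))
    (hφ : ∀ v : ℝ, v₀ ≤ v → φ v = c * v / (Real.log v) ^ α)
    (H : ℝ → ℝ) (hH : ∀ v : ℝ, H v = ∫ x in (1:ℝ)..v, 1 / φ x)
    (Hinv : ℝ → ℝ)
    (hinv_mem : ∀ z ∈ Ici (0:ℝ), Hinv z ∈ Ici (1:ℝ))
    (hinv_left : ∀ v ∈ Ici (1:ℝ), Hinv (H v) = v)
    (hinv_right : ∀ z ∈ Ici (0:ℝ), H (Hinv z) = z)
    (r : ℝ → ℝ) (hr : ∀ z : ℝ, r z = φ (Hinv z)) :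
    ∃ C₁ C₂ : ℝ, 0 < C₁ ∧ 0 < C₂ ∧ ∀ᶠ n : ℕ in atTop,
      C₁ ≤ r n * (n : ℝ) ^ (α / (1 + α)) * Real.exp (-(c * (1 + α) * n) ^ (1 / (1 + α))) ∧
      r n * (n : ℝ) ^ (α / (1 + α)) * Real.exp (-(c * (1 + α) * n) ^ (1 / (1 + α))) ≤ C₂ :=
  rphi_subexponential_rate_general c α v₀ hc hα hv₀ φ hpos hdiff hφ H hH Hinv hinv_mem hinv_right r
    hr
end

section
/- Let (X_n) and (X_n') be two coupled Markov chains on the same probability space with common transition kernel P, initial states x and x', and coupling time T = inf{k ≥ 1 : X_k = X_k'} such that X_k = X_k' for all k ≥ T. Then for any non-decreasing sequence r and any measurable f ≥ 0: ∑_{k=0}^∞ r(k)·‖P^k(x,·) − P^k(x',·)‖_f ≤ E[∑_{j=0}^{T−1} r(j)·(f(X_j) + f(X_j'))] (Lindvall's inequality). -/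
open MeasureTheory ProbabilityTheory Set
open scoped ENNReal

/-- Iterates of a Markov kernel: `kernelIter P 0 = id`, `kernelIter P (n+1) = P ∘ₖ kernelIter P n`. -/
noncomputable def kernelIter {X : Type*} [MeasurableSpace X] (P : Kernel X X) : ℕ → Kernel X X
  | 0 => Kernel.id
  | n + 1 => P.comp (kernelIter P n)

/-- The `f`-distance between two (finite) measures: `sup { |∫g dμ − ∫g dν| : |g| ≤ f }`. -/
noncomputable def fdist {X : Type*} [MeasurableSpace X] (f : X → ℝ) (μ ν : Measure X) : ℝ :=
  sSup { r : ℝ | ∃ g : X → ℝ, Measurable g ∧ (∀ x, |g x| ≤ f x) ∧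
    r = |(∫ x, g x ∂μ) - ∫ x, g x ∂ν| }

/-!
For `|g| ≤ f`, the laws of `X_k` and `X_k'` are `P^k(x,·)` and `P^k(x',·)`, so
`P^k g(x) − P^k g(x') = E[g(X_k) − g(X_k')]`. The integrand vanishes once the chains have met,
i.e. off `{k < T}`, and is bounded by `f(X_k) + f(X_k')` on it. Weighting by `r k`, summing
and exchanging sum and expectation gives the inequality.
-/

section Integral

variable {Ω : Type*} [MeasurableSpace Ω] {μ : Measure Ω}

theorem enorm_integral_sub_integral_le {E : Type*} [NormedAddCommGroup E] [NormedSpace ℝ E]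
    (u v : Ω → E) (huv : AEStronglyMeasurable (fun ω => u ω - v ω) μ) :
    ‖∫ ω, u ω ∂μ - ∫ ω, v ω ∂μ‖ₑ ≤ ∫⁻ ω, ‖u ω - v ω‖ₑ ∂μ := by
  rcases eq_or_ne (∫⁻ ω, ‖u ω - v ω‖ₑ ∂μ) ⊤ with htop | htop
  · simp [htop]
  have hint : Integrable (fun ω => u ω - v ω) μ := ⟨huv, htop.lt_top⟩
  by_cases hu : Integrable u μ
  · have hv : Integrable v μ := (hu.sub hint).congr (ae_of_all _ fun ω => by simp)
    rw [← integral_sub hu hv]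
    exact enorm_integral_le_lintegral_enorm _
  · have hv : ¬ Integrable v μ := fun hv => hu ((hv.add hint).congr (ae_of_all _ fun ω => by simp))
    simp [integral_undef hu, integral_undef hv]

-- The events `{k < T}` need not be measurable, so neither are the integrands.
theorem tsum_lintegral_le_lintegral_tsum {ι : Type*} [Countable ι] (F : ι → Ω → ℝ≥0∞) :
    ∑' i, ∫⁻ ω, F i ω ∂μ ≤ ∫⁻ ω, ∑' i, F i ω ∂μ := by
  choose G hGm hGF hG using fun i => exists_measurable_le_lintegral_eq μ (F i)
  calc ∑' i, ∫⁻ ω, F i ω ∂μ = ∫⁻ ω, ∑' i, G i ω ∂μ := by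
        simp only [hG, lintegral_tsum fun i => (hGm i).aemeasurable]
    _ ≤ ∫⁻ ω, ∑' i, F i ω ∂μ := lintegral_mono fun ω => ENNReal.tsum_le_tsum fun i => hGF i ω

end Integral

theorem ofReal_fdist_map_le {X Ω : Type*} [MeasurableSpace X] [MeasurableSpace Ω] {μ : Measure Ω}
    {f : X → ℝ} {Y Y' : Ω → X} (hY : Measurable Y) (hY' : Measurable Y') {F : Ω → ℝ≥0∞}
    (hF : ∀ ω, Y ω ≠ Y' ω → ENNReal.ofReal (f (Y ω) + f (Y' ω)) ≤ F ω) :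
    ENNReal.ofReal (fdist f (μ.map Y) (μ.map Y')) ≤ ∫⁻ ω, F ω ∂μ := by
  rcases eq_or_ne (∫⁻ ω, F ω ∂μ) ⊤ with htop | htop
  · simp [htop]
  refine ENNReal.ofReal_le_of_le_toReal (Real.sSup_le ?_ ENNReal.toReal_nonneg)
  rintro _ ⟨g, hg, hgf, rfl⟩
  have hpt : ∀ ω, ‖g (Y ω) - g (Y' ω)‖ₑ ≤ F ω := by
    intro ω
    by_cases hω : Y ω = Y' ω
    · simp [hω]
    · refine le_trans ?_ (hF ω hω)
      rw [← ofReal_norm]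
      exact ENNReal.ofReal_le_ofReal ((abs_sub _ _).trans (add_le_add (hgf _) (hgf _)))
  rw [integral_map hY.aemeasurable hg.aestronglyMeasurable,
    integral_map hY'.aemeasurable hg.aestronglyMeasurable, ← Real.norm_eq_abs, ← toReal_enorm]
  refine ENNReal.toReal_mono htop ((enorm_integral_sub_integral_le _ _ ?_).trans (lintegral_mono hpt))
  exact ((hg.comp hY).sub (hg.comp hY')).aestronglyMeasurable

theorem lindvall_inequality_general {X : Type*} [MeasurableSpace X]
    (P : Kernel X X) (x x' : X)
    {Ω : Type*} [MeasurableSpace Ω] (μ : Measure Ω)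
    (Xc X'c : ℕ → Ω → X)
    (hXm : ∀ k, Measurable (Xc k)) (hX'm : ∀ k, Measurable (X'c k))
    (hlaw : ∀ k, Measure.map (Xc k) μ = kernelIter P k x)
    (hlaw' : ∀ k, Measure.map (X'c k) μ = kernelIter P k x')
    (T : Ω → ℕ∞)
    (hcoal : ∀ ω (k : ℕ), T ω ≤ (k : ℕ∞) → Xc k ω = X'c k ω)
    (r : ℕ → ℝ) (hr0 : ∀ n, 0 ≤ r n)
    (f : X → ℝ) :
    ∑' k : ℕ, ENNReal.ofReal (r k * fdist f (kernelIter P k x) (kernelIter P k x')) ≤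
      ∫⁻ ω, ∑' j : ℕ, (if (j : ℕ∞) < T ω then
        ENNReal.ofReal (r j * (f (Xc j ω) + f (X'c j ω))) else 0) ∂μ := by
  refine le_trans (ENNReal.tsum_le_tsum fun k => ?_) (tsum_lintegral_le_lintegral_tsum _)
  calc ENNReal.ofReal (r k * fdist f (kernelIter P k x) (kernelIter P k x'))
      = ENNReal.ofReal (r k) * ENNReal.ofReal (fdist f (μ.map (Xc k)) (μ.map (X'c k))) := by
        rw [ENNReal.ofReal_mul (hr0 k), hlaw, hlaw']
    _ ≤ ENNReal.ofReal (r k) * ∫⁻ ω, (if (k : ℕ∞) < T ω then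
          ENNReal.ofReal (f (Xc k ω) + f (X'c k ω)) else 0) ∂μ := by
        gcongr
        refine ofReal_fdist_map_le (hXm k) (hX'm k) fun ω hne => ?_
        rw [if_pos (lt_of_not_ge fun hle => hne (hcoal ω k hle))]
    _ = _ := by
        rw [← lintegral_const_mul' _ _ ENNReal.ofReal_ne_top]
        congr with ω
        split_ifs <;> simp [ENNReal.ofReal_mul (hr0 k)]

/-- Lindvall's inequality: for coupled chains `(X_n)`, `(X_n')` with common kernel `P`,
initial states `x`, `x'`, and coupling time `T`,
`∑_k r(k) ‖P^k(x,·) − P^k(x',·)‖_f ≤ E[∑_{j<T} r(j)(f(X_j)+f(X_j'))]`. -/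
theorem lindvall_inequality {X : Type*} [MeasurableSpace X]
    (P : Kernel X X) [IsMarkovKernel P] (x x' : X)
    {Ω : Type*} [MeasurableSpace Ω] (μ : Measure Ω) [IsProbabilityMeasure μ]
    (Xc X'c : ℕ → Ω → X)
    (hXm : ∀ k, Measurable (Xc k)) (hX'm : ∀ k, Measurable (X'c k))
    (hlaw : ∀ k, Measure.map (Xc k) μ = kernelIter P k x)
    (hlaw' : ∀ k, Measure.map (X'c k) μ = kernelIter P k x')
    (T : Ω → ℕ∞)
    (hT : ∀ ω, T ω = ⨅ (k : ℕ) (_ : 1 ≤ k ∧ Xc k ω = X'c k ω), (k : ℕ∞))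
    (hcoal : ∀ ω (k : ℕ), T ω ≤ (k : ℕ∞) → Xc k ω = X'c k ω)
    (r : ℕ → ℝ) (hrm : Monotone r) (hr0 : ∀ n, 0 ≤ r n)
    (f : X → ℝ) (hfm : Measurable f) (hf0 : ∀ y, 0 ≤ f y) :
    ∑' k : ℕ, ENNReal.ofReal (r k * fdist f (kernelIter P k x) (kernelIter P k x')) ≤
      ∫⁻ ω, ∑' j : ℕ, (if (j : ℕ∞) < T ω then
        ENNReal.ofReal (r j * (f (Xc j ω) + f (X'c j ω))) else 0) ∂μ :=
  lindvall_inequality_general P x x' μ Xc X'c hXm hX'm hlaw hlaw' T hcoal r hr0 f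
end

section
/- Let ε ∈ (0,1) and let (X_n, X_n') be a Markov chain on X × X with kernel P̌, and let N_n = ∑_{i=0}^n 1_{C×C}(X_i, X_i'). Construct the extended chain (X_n, X_n', d_n) on X × X × {0,1} where, whenever (X_n, X_n') ∈ C×C and d_n = 0, coupling occurs (d_{n+1} = 1) with probability ε independently, and otherwise the chain moves according to P̌ with d_{n+1} = d_n. Let T = inf{k ≥ 1 : d_k = 1}. Then for any non-negative function χ_n of (X_0,...,X_n, X_0',...,X_n'): Ẽ_{x,x',0}[χ_n·1{T > n}] = Ě_{x,x'}[χ_n·(1−ε)^{N_{n−1}}]. -/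
open MeasureTheory ProbabilityTheory Set Finset
open scoped ENNReal

/-!
Both sides are integrals against laws of the first `n + 1` steps of a path: on the left, the law of
the extended chain restricted to `{d n = 0}` (which is `{T > n}`), on the right, the law of the
bivariate chain weighted by `∏_{i<n} (1 - ε 1_{C×C}(X̌_i, X̌'_i)) = (1 - ε)^{N_{n-1}}`.
By the two Markov properties, both families of laws obey the same recursion: the mass of a
rectangle `S × T` of (path up to `n`, next state) is the integral of
`1_S(p) (1 - ε 1_{C×C}(p_n)) P̌(p_n, T)` against the law at time `n`. Finite measures on a
product agreeing on rectangles coincide, so the two laws agree for every `n` by induction.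
-/

section SamplePath

variable {β Ω : Type*}

def samplePath (Z : ℕ → Ω → β) (n : ℕ) (ω : Ω) : Fin (n + 1) → β := fun i => Z i ω

lemma samplePath_succ (Z : ℕ → Ω → β) (n : ℕ) (ω : Ω) :
    samplePath Z (n + 1) ω = Fin.snoc (samplePath Z n ω) (Z (n + 1) ω) := by
  ext i
  induction i using Fin.lastCases <;> simp [samplePath]

variable [MeasurableSpace β] [MeasurableSpace Ω]

lemma measurable_samplePath {Z : ℕ → Ω → β} (hZ : ∀ n, Measurable (Z n)) (n : ℕ) :
    Measurable (samplePath Z n) :=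
  measurable_pi_lambda _ fun i => hZ i

lemma measurable_snoc_uncurry {n : ℕ} :
    Measurable fun q : (Fin (n + 1) → β) × β => (Fin.snoc q.1 q.2 : Fin (n + 2) → β) := by
  refine measurable_pi_lambda _ fun i => ?_
  induction i using Fin.lastCases with
  | last => simpa using measurable_snd
  | cast j =>
    simp only [Fin.snoc_castSucc]
    exact (measurable_pi_apply j).comp measurable_fst

lemma map_samplePath_succ (ρ : Measure Ω) {Z : ℕ → Ω → β} (hZ : ∀ n, Measurable (Z n))
    (n : ℕ) :
    ρ.map (samplePath Z (n + 1)) =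
      (ρ.map fun ω => (samplePath Z n ω, Z (n + 1) ω)).map fun q => Fin.snoc q.1 q.2 := by
  rw [Measure.map_map measurable_snoc_uncurry ((measurable_samplePath hZ n).prodMk (hZ _))]
  exact congrArg (Measure.map · ρ) (funext fun ω => samplePath_succ Z n ω)

lemma map_samplePath_zero (ρ : Measure Ω) {Z : ℕ → Ω → β} {b : β}
    (h : ∀ᵐ ω ∂ρ, Z 0 ω = b) :
    ρ.map (samplePath Z 0) = ρ univ • Measure.dirac fun _ => b := by
  rw [← Measure.map_const]
  refine Measure.map_congr (h.mono fun ω hω => funext fun i => ?_)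
  simpa [samplePath, Fin.fin_one_eq_zero i] using hω

end SamplePath

lemma lt_iInf_hitting_iff {d : ℕ → Bool} (h0 : d 0 = false)
    (habs : ∀ n, d n = true → d (n + 1) = true) (n : ℕ) :
    (n : ℕ∞) < ⨅ (k : ℕ) (_ : 1 ≤ k ∧ d k = true), (k : ℕ∞) ↔ d n = false := by
  have hmono : Monotone d :=
    monotone_nat_of_le_succ fun k => by cases h : d k <;> simp [habs k, h]
  constructor
  · intro hlt
    by_contra hn
    rw [Bool.not_eq_false] at hn
    have hn1 : 1 ≤ n := Nat.one_le_iff_ne_zero.2 (by rintro rfl; simp [h0] at hn)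
    exact (iInf₂_le (f := fun (k : ℕ) (_ : 1 ≤ k ∧ d k = true) => (k : ℕ∞)) n ⟨hn1, hn⟩).not_gt hlt
  · intro hn
    refine (ENat.natCast_lt_natCast.2 n.lt_succ_self).trans_le (le_iInf₂ fun k ⟨_, hk⟩ => ?_)
    have hnk : n < k := by
      by_contra! hkn
      have hle := hmono hkn
      rw [hk, hn] at hle
      exact absurd hle (by decide)
    exact_mod_cast hnk

lemma one_sub_mul_indicator_eq_pow {β : Type*} (ε : ℝ≥0∞) (A : Set β) (b : β) :
    1 - ε * A.indicator (fun _ => 1) b = (1 - ε) ^ A.indicator (fun _ => 1) b := by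
  by_cases hb : b ∈ A <;> simp [hb]

section KilledChain

variable {β Ω : Type*} [MeasurableSpace β] [MeasurableSpace Ω]

noncomputable def killedLaw (μ : Measure Ω) (Z : ℕ → Ω → β) (d : ℕ → Ω → Bool) (n : ℕ) :
    Measure (Fin (n + 1) → β) :=
  (μ.restrict {ω | d n ω = false}).map (samplePath Z n)

lemma killedLaw_step (P : Kernel β β) (s : β → ℝ≥0∞) (hs : Measurable s)
    (μ : Measure Ω) {Z : ℕ → Ω → β} {d : ℕ → Ω → Bool}
    (hZ : ∀ n, Measurable (Z n)) (hd : ∀ n, Measurable (d n))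
    (habs : ∀ᵐ ω ∂μ, ∀ n, d n ω = true → d (n + 1) ω = true)
    (hdyn : ∀ (n : ℕ) (g : β → ℝ≥0∞) (h : (Fin (n + 1) → β) → ℝ≥0∞),
      Measurable g → Measurable h →
      ∫⁻ ω, (if d n ω = false ∧ d (n + 1) ω = false then g (Z (n + 1) ω) else 0) *
          h (samplePath Z n ω) ∂μ =
      ∫⁻ ω, (if d n ω = false then s (Z n ω) * ∫⁻ y, g y ∂(P (Z n ω)) else 0) *
          h (samplePath Z n ω) ∂μ)
    (n : ℕ) {S : Set (Fin (n + 1) → β)} {T : Set β} (hS : MeasurableSet S)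
    (hT : MeasurableSet T) :
    ((μ.restrict {ω | d (n + 1) ω = false}).map fun ω => (samplePath Z n ω, Z (n + 1) ω))
        (S ×ˢ T) =
      ∫⁻ p, S.indicator 1 p * (s (p (Fin.last n)) * P (p (Fin.last n)) T) ∂killedLaw μ Z d n := by
  have hD : ∀ k, MeasurableSet {ω | d k ω = false} := fun k => hd k (measurableSet_singleton _)
  have hφ : Measurable fun p : Fin (n + 1) → β =>
      S.indicator 1 p * (s (p (Fin.last n)) * P (p (Fin.last n)) T) :=
    (measurable_one.indicator hS).mul
      ((hs.comp (measurable_pi_apply _)).mul ((P.measurable_coe hT).comp (measurable_pi_apply _)))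
  rw [← lintegral_indicator_one (hS.prod hT),
    lintegral_map (measurable_one.indicator (hS.prod hT))
      ((measurable_samplePath hZ n).prodMk (hZ _)),
    ← lintegral_indicator (hD _), killedLaw, lintegral_map hφ (measurable_samplePath hZ n),
    ← lintegral_indicator (hD _)]
  calc _ = ∫⁻ ω, (if d n ω = false ∧ d (n + 1) ω = false then T.indicator 1 (Z (n + 1) ω)
          else 0) * S.indicator 1 (samplePath Z n ω) ∂μ := by
        -- `d` is absorbing, so a.s. `{d (n + 1) = 0} ⊆ {d n = 0}`
        refine lintegral_congr_ae (habs.mono fun ω hω => ?_)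
        cases h1 : d (n + 1) ω
        · have h0 : d n ω = false := by
            cases h0 : d n ω
            · rfl
            · simp [hω n h0] at h1
          simp [indicator_prod_one, h0, h1, mul_comm]
        · simp [h1]
    _ = _ := hdyn n _ _ (measurable_one.indicator hT) (measurable_one.indicator hS)
    _ = _ := by
        refine lintegral_congr fun ω => ?_
        cases h0 : d n ω
        · simp [lintegral_indicator_one hT, samplePath, h0, mul_comm]
        · simp [h0]

end KilledChain

section WeightedChain

variable {β Ω : Type*} [MeasurableSpace β] [MeasurableSpace Ω]

noncomputable def weightedLaw (ν : Measure Ω) (W : ℕ → Ω → β) (s : β → ℝ≥0∞) (n : ℕ) :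
    Measure (Fin (n + 1) → β) :=
  (ν.withDensity fun ω => ∏ i ∈ range n, s (W i ω)).map (samplePath W n)

lemma weightedLaw_step (P : Kernel β β) {s : β → ℝ≥0∞} (hs : Measurable s)
    (ν : Measure Ω) {W : ℕ → Ω → β} (hW : ∀ n, Measurable (W n))
    (hmarkov : ∀ (n : ℕ) (g : β → ℝ≥0∞) (h : (Fin (n + 1) → β) → ℝ≥0∞),
      Measurable g → Measurable h →
      ∫⁻ ω, g (W (n + 1) ω) * h (samplePath W n ω) ∂ν =
      ∫⁻ ω, (∫⁻ y, g y ∂(P (W n ω))) * h (samplePath W n ω) ∂ν)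
    (n : ℕ) {S : Set (Fin (n + 1) → β)} {T : Set β} (hS : MeasurableSet S)
    (hT : MeasurableSet T) :
    ((ν.withDensity fun ω => ∏ i ∈ range (n + 1), s (W i ω)).map
        fun ω => (samplePath W n ω, W (n + 1) ω)) (S ×ˢ T) =
      ∫⁻ p, S.indicator 1 p * (s (p (Fin.last n)) * P (p (Fin.last n)) T)
        ∂weightedLaw ν W s n := by
  have hweight : ∀ k, Measurable fun ω => ∏ i ∈ range k, s (W i ω) :=
    fun k => Finset.measurable_prod _ fun i _ => hs.comp (hW i)
  have hpair : Measurable fun ω => (samplePath W n ω, W (n + 1) ω) :=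
    (measurable_samplePath hW n).prodMk (hW _)
  have hφ : Measurable fun p : Fin (n + 1) → β =>
      S.indicator 1 p * (s (p (Fin.last n)) * P (p (Fin.last n)) T) :=
    (measurable_one.indicator hS).mul
      ((hs.comp (measurable_pi_apply _)).mul ((P.measurable_coe hT).comp (measurable_pi_apply _)))
  have hh : Measurable fun p : Fin (n + 1) → β => S.indicator 1 p * ∏ i, s (p i) :=
    (measurable_one.indicator hS).mul
      (Finset.measurable_prod _ fun i _ => hs.comp (measurable_pi_apply i))
  rw [← lintegral_indicator_one (hS.prod hT),
    lintegral_map (measurable_one.indicator (hS.prod hT)) hpair,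
    lintegral_withDensity_eq_lintegral_mul _ (hweight _)
      (by exact (measurable_one.indicator (hS.prod hT)).comp hpair),
    weightedLaw, lintegral_map hφ (measurable_samplePath hW n),
    lintegral_withDensity_eq_lintegral_mul _ (hweight n)
      (by exact hφ.comp (measurable_samplePath hW n))]
  calc _ = ∫⁻ ω, T.indicator 1 (W (n + 1) ω) *
          (S.indicator 1 (samplePath W n ω) * ∏ i, s (samplePath W n ω i)) ∂ν := by
        refine lintegral_congr fun ω => ?_
        simp only [← Fin.prod_univ_eq_prod_range, indicator_prod_one, Pi.mul_apply, samplePath]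
        ring
    -- the weight `∏_{i ≤ n} s(W_i)` is a function of the path up to `n`
    _ = _ := hmarkov n _ _ (measurable_one.indicator hT) hh
    _ = _ := by
        refine lintegral_congr fun ω => ?_
        simp only [lintegral_indicator_one hT, samplePath, Fin.prod_univ_castSucc,
          Fin.val_castSucc, Fin.val_last, ← Fin.prod_univ_eq_prod_range, Pi.mul_apply]
        ring

end WeightedChain

section KilledEqWeighted

variable {β Ω Ω' : Type*} [MeasurableSpace β] [MeasurableSpace Ω] [MeasurableSpace Ω']

theorem killedLaw_eq_weightedLaw (P : Kernel β β) {s : β → ℝ≥0∞} (hs : Measurable s) {b : β}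
    (μ : Measure Ω) [IsProbabilityMeasure μ] {Z : ℕ → Ω → β} {d : ℕ → Ω → Bool}
    (hZ : ∀ n, Measurable (Z n)) (hd : ∀ n, Measurable (d n))
    (hinit : ∀ᵐ ω ∂μ, Z 0 ω = b ∧ d 0 ω = false)
    (habs : ∀ᵐ ω ∂μ, ∀ n, d n ω = true → d (n + 1) ω = true)
    (hdyn : ∀ (n : ℕ) (g : β → ℝ≥0∞) (h : (Fin (n + 1) → β) → ℝ≥0∞),
      Measurable g → Measurable h →
      ∫⁻ ω, (if d n ω = false ∧ d (n + 1) ω = false then g (Z (n + 1) ω) else 0) *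
          h (samplePath Z n ω) ∂μ =
      ∫⁻ ω, (if d n ω = false then s (Z n ω) * ∫⁻ y, g y ∂(P (Z n ω)) else 0) *
          h (samplePath Z n ω) ∂μ)
    (ν : Measure Ω') [IsProbabilityMeasure ν] {W : ℕ → Ω' → β} (hW : ∀ n, Measurable (W n))
    (hinit' : ∀ᵐ ω ∂ν, W 0 ω = b)
    (hmarkov : ∀ (n : ℕ) (g : β → ℝ≥0∞) (h : (Fin (n + 1) → β) → ℝ≥0∞),
      Measurable g → Measurable h →
      ∫⁻ ω, g (W (n + 1) ω) * h (samplePath W n ω) ∂ν =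
      ∫⁻ ω, (∫⁻ y, g y ∂(P (W n ω))) * h (samplePath W n ω) ∂ν)
    (n : ℕ) :
    killedLaw μ Z d n = weightedLaw ν W s n := by
  induction n with
  | zero =>
    rw [killedLaw, weightedLaw, Measure.restrict_eq_self_of_ae_mem (s := {ω | d 0 ω = false}) (hinit.mono fun _ h => h.2),
      map_samplePath_zero μ (hinit.mono fun _ h => h.1)]
    simp only [range_zero, Finset.prod_empty]
    rw [← Pi.one_def, withDensity_one, map_samplePath_zero ν hinit', measure_univ, measure_univ]
  | succ n ih =>
    rw [killedLaw, weightedLaw, map_samplePath_succ _ hZ, map_samplePath_succ _ hW]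
    congr 1
    refine Measure.ext_prod fun hS hT => ?_
    rw [killedLaw_step P s hs μ hZ hd habs hdyn n hS hT,
      weightedLaw_step P hs ν hW hmarkov n hS hT, ih]

lemma setLIntegral_eq_lintegral_mul_of_killedLaw_eq {s : β → ℝ≥0∞} (hs : Measurable s)
    {μ : Measure Ω} {Z : ℕ → Ω → β} {d : ℕ → Ω → Bool} (hZ : ∀ n, Measurable (Z n))
    {ν : Measure Ω'} {W : ℕ → Ω' → β} (hW : ∀ n, Measurable (W n)) {n : ℕ}
    (hlaw : killedLaw μ Z d n = weightedLaw ν W s n) {χ : (Fin (n + 1) → β) → ℝ≥0∞}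
    (hχ : Measurable χ) :
    ∫⁻ ω in {ω | d n ω = false}, χ (samplePath Z n ω) ∂μ =
      ∫⁻ ω, χ (samplePath W n ω) * ∏ i ∈ range n, s (W i ω) ∂ν := by
  have hweight : Measurable fun ω => ∏ i ∈ range n, s (W i ω) :=
    Finset.measurable_prod _ fun i _ => hs.comp (hW i)
  have := congrArg (fun m => ∫⁻ p, χ p ∂m) hlaw
  simp only [killedLaw, weightedLaw] at this
  rw [← lintegral_map hχ (measurable_samplePath hZ n), this, lintegral_map hχ (measurable_samplePath hW n),
    lintegral_withDensity_eq_lintegral_mul _ hweight (by exact hχ.comp (measurable_samplePath hW n))]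
  simp only [Pi.mul_apply, mul_comm]

end KilledEqWeighted

theorem coupling_fundamental_identity_general {X : Type*} [MeasurableSpace X]
    (Pc : Kernel (X × X) (X × X))
    (C : Set X) (hC : MeasurableSet C) (ε : ℝ≥0∞)
    (x x' : X)
    -- the extended chain `(X̃_n, X̃'_n, d_n)` on a probability space `Ω̃`
    {Ωt : Type*} [MeasurableSpace Ωt] (μt : Measure Ωt) [IsProbabilityMeasure μt]
    (Xt X't : ℕ → Ωt → X) (d : ℕ → Ωt → Bool)
    (hXtm : ∀ n, Measurable (Xt n)) (hX'tm : ∀ n, Measurable (X't n))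
    (hdm : ∀ n, Measurable (d n))
    (hinit_t : ∀ᵐ ω ∂μt, Xt 0 ω = x ∧ X't 0 ω = x' ∧ d 0 ω = false)
    (habs : ∀ᵐ ω ∂μt, ∀ n, d n ω = true → d (n + 1) ω = true)
    (hdyn : ∀ (n : ℕ) (g : X × X → ℝ≥0∞) (h : (Fin (n + 1) → X × X) → ℝ≥0∞),
      Measurable g → Measurable h →
      ∫⁻ ω, (if d n ω = false ∧ d (n + 1) ω = false then
          g (Xt (n + 1) ω, X't (n + 1) ω) else 0) *
          h (fun i => (Xt i ω, X't i ω)) ∂μt =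
      ∫⁻ ω, (if d n ω = false then
          (1 - ε * Set.indicator (C ×ˢ C) (fun _ => (1 : ℝ≥0∞)) (Xt n ω, X't n ω)) *
          ∫⁻ y, g y ∂(Pc (Xt n ω, X't n ω)) else 0) *
          h (fun i => (Xt i ω, X't i ω)) ∂μt)
    -- the bivariate chain `(X̌_n, X̌'_n)` with kernel `P̌` on a probability space `Ω̌`
    {Ωc : Type*} [MeasurableSpace Ωc] (μc : Measure Ωc) [IsProbabilityMeasure μc]
    (Yc Y'c : ℕ → Ωc → X)
    (hYm : ∀ n, Measurable (Yc n)) (hY'm : ∀ n, Measurable (Y'c n))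
    (hinit_c : ∀ᵐ ω ∂μc, Yc 0 ω = x ∧ Y'c 0 ω = x')
    (hmarkov_c : ∀ (n : ℕ) (g : X × X → ℝ≥0∞) (h : (Fin (n + 1) → X × X) → ℝ≥0∞),
      Measurable g → Measurable h →
      ∫⁻ ω, g (Yc (n + 1) ω, Y'c (n + 1) ω) * h (fun i => (Yc i ω, Y'c i ω)) ∂μc =
      ∫⁻ ω, (∫⁻ y, g y ∂(Pc (Yc n ω, Y'c n ω))) * h (fun i => (Yc i ω, Y'c i ω)) ∂μc)
    -- the coupling time and the number of visits to `C × C`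
    (T : Ωt → ℕ∞)
    (hT : ∀ ω, T ω = ⨅ (k : ℕ) (_ : 1 ≤ k ∧ d k ω = true), (k : ℕ∞))
    (N : ℕ → Ωc → ℕ)
    (hN : ∀ n ω, N n ω = ∑ i ∈ Finset.range n,
      Set.indicator (C ×ˢ C) (fun _ => 1) (Yc i ω, Y'c i ω)) :
    ∀ (n : ℕ) (χ : (Fin (n + 1) → X × X) → ℝ≥0∞), Measurable χ →
      ∫⁻ ω, χ (fun i => (Xt i ω, X't i ω)) * (if (n : ℕ∞) < T ω then 1 else 0) ∂μt =
      ∫⁻ ω, χ (fun i => (Yc i ω, Y'c i ω)) * (1 - ε) ^ (N n ω) ∂μc := by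
  intro n χ hχ
  set Z : ℕ → Ωt → X × X := fun k ω => (Xt k ω, X't k ω)
  set W : ℕ → Ωc → X × X := fun k ω => (Yc k ω, Y'c k ω)
  set s : X × X → ℝ≥0∞ := fun b => 1 - ε * (C ×ˢ C).indicator (fun _ => 1) b
  have hs : Measurable s :=
    measurable_const.sub (measurable_const.mul (measurable_const.indicator (hC.prod hC)))
  have hZ : ∀ k, Measurable (Z k) := fun k => (hXtm k).prodMk (hX'tm k)
  have hW : ∀ k, Measurable (W k) := fun k => (hYm k).prodMk (hY'm k)
  have hlaw : killedLaw μt Z d n = weightedLaw μc W s n :=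
    killedLaw_eq_weightedLaw Pc hs (b := (x, x')) μt hZ hdm
      (hinit_t.mono fun _ h => ⟨Prod.ext h.1 h.2.1, h.2.2⟩) habs hdyn μc hW
      (hinit_c.mono fun _ h => Prod.ext h.1 h.2) hmarkov_c n
  have hsurvive : ∀ᵐ ω ∂μt, ((n : ℕ∞) < T ω ↔ d n ω = false) := by
    filter_upwards [hinit_t, habs] with ω hinit hω
    rw [hT]
    exact lt_iInf_hitting_iff hinit.2.2 hω n
  have hweight : ∀ ω, (1 - ε) ^ N n ω = ∏ i ∈ range n, s (W i ω) := by
    intro ω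
    simp only [hN, ← prod_pow_eq_pow_sum, s, W, one_sub_mul_indicator_eq_pow]
  calc _ = ∫⁻ ω in {ω | d n ω = false}, χ (fun i => (Xt i ω, X't i ω)) ∂μt := by
        have hD : MeasurableSet {ω | d n ω = false} := hdm n (measurableSet_singleton false)
        rw [← lintegral_indicator hD]
        refine lintegral_congr_ae (hsurvive.mono fun ω hω => ?_)
        by_cases hn : d n ω = false <;> simp [hω, hn]
    _ = ∫⁻ ω, χ (samplePath W n ω) * ∏ i ∈ range n, s (W i ω) ∂μc :=
        setLIntegral_eq_lintegral_mul_of_killedLaw_eq hs hZ hW hlaw hχ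
    _ = _ := by simp only [hweight]; rfl

/-- The fundamental coupling identity: for the extended chain `(X_n, X_n', d_n)` in which,
at each joint visit to `C × C` with `d_n = 0`, coupling occurs with probability `ε` and
otherwise the bivariate chain moves according to `P̌`, one has, for every adapted
non-negative path functional `χ_n`,
`Ẽ_{x,x',0}[χ_n 1{T > n}] = Ě_{x,x'}[χ_n (1−ε)^{N_{n−1}}]`. -/
theorem coupling_fundamental_identity {X : Type*} [MeasurableSpace X]
    (Pc : Kernel (X × X) (X × X)) [IsMarkovKernel Pc]
    (C : Set X) (hC : MeasurableSet C) (ε : ℝ≥0∞) (hε0 : 0 < ε) (hε1 : ε < 1)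
    (x x' : X)
    -- the extended chain `(X̃_n, X̃'_n, d_n)` on a probability space `Ω̃`
    {Ωt : Type*} [MeasurableSpace Ωt] (μt : Measure Ωt) [IsProbabilityMeasure μt]
    (Xt X't : ℕ → Ωt → X) (d : ℕ → Ωt → Bool)
    (hXtm : ∀ n, Measurable (Xt n)) (hX'tm : ∀ n, Measurable (X't n))
    (hdm : ∀ n, Measurable (d n))
    (hinit_t : ∀ᵐ ω ∂μt, Xt 0 ω = x ∧ X't 0 ω = x' ∧ d 0 ω = false)
    (habs : ∀ᵐ ω ∂μt, ∀ n, d n ω = true → d (n + 1) ω = true)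
    (hdyn : ∀ (n : ℕ) (g : X × X → ℝ≥0∞) (h : (Fin (n + 1) → X × X) → ℝ≥0∞),
      Measurable g → Measurable h →
      ∫⁻ ω, (if d n ω = false ∧ d (n + 1) ω = false then
          g (Xt (n + 1) ω, X't (n + 1) ω) else 0) *
          h (fun i => (Xt i ω, X't i ω)) ∂μt =
      ∫⁻ ω, (if d n ω = false then
          (1 - ε * Set.indicator (C ×ˢ C) (fun _ => (1 : ℝ≥0∞)) (Xt n ω, X't n ω)) *
          ∫⁻ y, g y ∂(Pc (Xt n ω, X't n ω)) else 0) *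
          h (fun i => (Xt i ω, X't i ω)) ∂μt)
    -- the bivariate chain `(X̌_n, X̌'_n)` with kernel `P̌` on a probability space `Ω̌`
    {Ωc : Type*} [MeasurableSpace Ωc] (μc : Measure Ωc) [IsProbabilityMeasure μc]
    (Yc Y'c : ℕ → Ωc → X)
    (hYm : ∀ n, Measurable (Yc n)) (hY'm : ∀ n, Measurable (Y'c n))
    (hinit_c : ∀ᵐ ω ∂μc, Yc 0 ω = x ∧ Y'c 0 ω = x')
    (hmarkov_c : ∀ (n : ℕ) (g : X × X → ℝ≥0∞) (h : (Fin (n + 1) → X × X) → ℝ≥0∞),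
      Measurable g → Measurable h →
      ∫⁻ ω, g (Yc (n + 1) ω, Y'c (n + 1) ω) * h (fun i => (Yc i ω, Y'c i ω)) ∂μc =
      ∫⁻ ω, (∫⁻ y, g y ∂(Pc (Yc n ω, Y'c n ω))) * h (fun i => (Yc i ω, Y'c i ω)) ∂μc)
    -- the coupling time and the number of visits to `C × C`
    (T : Ωt → ℕ∞)
    (hT : ∀ ω, T ω = ⨅ (k : ℕ) (_ : 1 ≤ k ∧ d k ω = true), (k : ℕ∞))
    (N : ℕ → Ωc → ℕ)
    (hN : ∀ n ω, N n ω = ∑ i ∈ Finset.range n,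
      Set.indicator (C ×ˢ C) (fun _ => 1) (Yc i ω, Y'c i ω)) :
    ∀ (n : ℕ) (χ : (Fin (n + 1) → X × X) → ℝ≥0∞), Measurable χ →
      ∫⁻ ω, χ (fun i => (Xt i ω, X't i ω)) * (if (n : ℕ∞) < T ω then 1 else 0) ∂μt =
      ∫⁻ ω, χ (fun i => (Yc i ω, Y'c i ω)) * (1 - ε) ^ (N n ω) ∂μc :=
  coupling_fundamental_identity_general Pc C hC ε x x' μt Xt X't d hXtm hX'tm hdm hinit_t habs hdyn
    μc Yc Y'c hYm hY'm hinit_c hmarkov_c T hT N hN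
end

section
/- Under the minorization condition (existence of ε ∈ (0,1) and ν with P(x,·) ≥ εν for x ∈ C), with the coupling construction above, let σ_j denote the time of the (j+1)-th visit of the bivariate chain to C×C and T the coupling time. Then for any subgeometric sequence r: Ẽ_{x,x',0}[r(T−1)] = ε·∑_{j=0}^∞ (1−ε)^j · Ě_{x,x'}[r(σ_j)]. -/
open MeasureTheory ProbabilityTheory Set Finset Filter
open scoped ENNReal

/-- Evaluation of a non-decreasing sequence at an extended natural time
(with value `sup r` at `∞`). -/
noncomputable def rext (r : ℕ → ℝ) (t : ℕ∞) : ℝ≥0∞ :=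
  ⨆ (n : ℕ) (_ : (n : ℕ∞) ≤ t), ENNReal.ofReal (r n)

/-!
Both sides are expanded by the layer-cake formula `r t = ∑_{n ≤ t} (r n - r (n - 1))`. On the left,
`n ≤ T - 1` means that the chains have not coupled by time `n`; on the right, `n ≤ σ_j` means that
the bivariate chain has made at most `j` visits `N_n` to `C × C` before time `n`. Coupling is a
killing of the bivariate chain with survival probability `1 - ε 𝟙_{C×C}` at each step, so the
probability of not having coupled by time `n` is `Ě[(1 - ε) ^ N_n]`, and
`q ^ N = (1 - q) ∑_{j ≥ N} q ^ j` turns this into `ε ∑_j (1 - ε) ^ j P̌(N_n ≤ j)`.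
-/

noncomputable def rIncrement (r : ℕ → ℝ) : ℕ → ℝ≥0∞
  | 0 => ENNReal.ofReal (r 0)
  | n + 1 => ENNReal.ofReal (r (n + 1)) - ENNReal.ofReal (r n)

section rext

variable {r : ℕ → ℝ}

lemma sum_range_succ_rIncrement (hr : Monotone r) (m : ℕ) :
    ∑ n ∈ range (m + 1), rIncrement r n = ENNReal.ofReal (r m) := by
  induction m with
  | zero => simp [rIncrement]
  | succ m ih =>
    rw [sum_range_succ, ih, rIncrement,
      add_tsub_cancel_of_le (ENNReal.ofReal_le_ofReal (hr m.le_succ))]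

lemma rext_natCast (hr : Monotone r) (m : ℕ) : rext r m = ENNReal.ofReal (r m) :=
  le_antisymm (iSup₂_le fun _ hn => ENNReal.ofReal_le_ofReal (hr (Nat.cast_le.mp hn)))
    (le_iSup₂_of_le m le_rfl le_rfl)

lemma rext_eq_tsum (hr : Monotone r) (t : ℕ∞) :
    rext r t = ∑' n : ℕ, if (n : ℕ∞) ≤ t then rIncrement r n else 0 := by
  induction t using ENat.recTopCoe with
  | top =>
    have hmono : Monotone fun m => ∑ n ∈ range m, rIncrement r n :=
      fun _ _ h => sum_le_sum_of_subset (range_subset_range.mpr h)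
    simp only [le_top, if_true, rext, iSup_pos, ENNReal.tsum_eq_iSup_nat,
      ← hmono.iSup_nat_add 1, sum_range_succ_rIncrement hr]
  | coe m =>
    rw [rext_natCast hr, ← sum_range_succ_rIncrement hr, tsum_eq_sum (s := range (m + 1))]
    · refine sum_congr rfl fun n hn => (if_pos ?_).symm
      exact_mod_cast Nat.lt_succ_iff.mp (mem_range.mp hn)
    · intro n hn
      rw [if_neg]
      exact_mod_cast not_le.mpr (Nat.lt_succ_iff.mp (not_le.mp (mt mem_range.mpr hn)))

end rext

lemma lintegral_rext_eq_tsum {Ω : Type*} [MeasurableSpace Ω] {μ : Measure Ω} {r : ℕ → ℝ}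
    (hr : Monotone r) {t : Ω → ℕ∞} (ht : ∀ n : ℕ, NullMeasurableSet {ω | (n : ℕ∞) ≤ t ω} μ) :
    ∫⁻ ω, rext r (t ω) ∂μ = ∑' n : ℕ, rIncrement r n * μ {ω | (n : ℕ∞) ≤ t ω} := by
  have hind : ∀ ω, rext r (t ω) =
      ∑' n : ℕ, {ω | (n : ℕ∞) ≤ t ω}.indicator (fun _ => rIncrement r n) ω := fun ω => by
    simp only [rext_eq_tsum hr, Set.indicator_apply, Set.mem_ofPred_eq]
  simp_rw [hind]
  rw [lintegral_tsum fun n => aemeasurable_const.indicator₀ (ht n)]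
  simp_rw [lintegral_indicator_const₀ (ht _)]

lemma ENNReal.pow_eq_one_sub_mul_tsum_ite {q : ℝ≥0∞} (hq : q < 1) (N : ℕ) :
    q ^ N = (1 - q) * ∑' j : ℕ, if N ≤ j then q ^ j else 0 := by
  have htail : (∑' j : ℕ, if N ≤ j then q ^ j else 0) = (1 - q)⁻¹ * q ^ N := by
    rw [← ENNReal.summable.sum_add_tsum_nat_add' (k := N)]
    have hhead : ∑ i ∈ range N, (if N ≤ i then q ^ i else 0) = 0 :=
      sum_eq_zero fun i hi => if_neg (not_le.mpr (mem_range.mp hi))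
    simp [hhead, pow_add, ENNReal.tsum_mul_right, ENNReal.tsum_geometric]
  rw [htail, ← mul_assoc, ENNReal.mul_inv_cancel (tsub_pos_of_lt hq).ne' (by simp), one_mul]

lemma lintegral_pow_eq_one_sub_mul_tsum {Ω : Type*} [MeasurableSpace Ω] {μ : Measure Ω}
    {q : ℝ≥0∞} (hq : q < 1) {N : Ω → ℕ} (hN : Measurable N) :
    ∫⁻ ω, q ^ N ω ∂μ = (1 - q) * ∑' j : ℕ, q ^ j * μ {ω | N ω ≤ j} := by
  have hset : ∀ j, MeasurableSet {ω | N ω ≤ j} := fun j => hN measurableSet_Iic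
  have hind : ∀ ω, q ^ N ω = (1 - q) * ∑' j : ℕ, {ω | N ω ≤ j}.indicator (fun _ => q ^ j) ω :=
    fun ω => by
      simp only [Set.indicator_apply, Set.mem_ofPred_eq, ← ENNReal.pow_eq_one_sub_mul_tsum_ite hq]
  simp_rw [hind]
  rw [lintegral_const_mul _ (Measurable.tsum fun j => measurable_const.indicator (hset j)),
    lintegral_tsum fun j => (measurable_const.indicator (hset j)).aemeasurable]
  simp_rw [lintegral_indicator_const (hset _)]

lemma Nat.exists_count_eq_of_lt_count {p : ℕ → Prop} [DecidablePred p] {j n : ℕ}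
    (h : j < Nat.count p n) : ∃ m < n, p m ∧ Nat.count p m = j := by
  have hj : ∀ hf : (Set.ofPred p).Finite, j < #hf.toFinset :=
    fun hf => h.trans_le (Nat.count_le_card hf n)
  exact ⟨Nat.nth p j, Nat.nth_lt_of_lt_count h, Nat.nth_mem j hj, Nat.count_nth hj⟩

lemma natCast_le_iff_count_le_of_iterated_hitting {p : ℕ → Prop} [DecidablePred p] {s : ℕ → ℕ∞}
    (h0 : s 0 = ⨅ (n : ℕ) (_ : p n), (n : ℕ∞))
    (hs : ∀ j, s (j + 1) = ⨅ (n : ℕ) (_ : s j < n ∧ p n), (n : ℕ∞)) (j n : ℕ) :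
    (n : ℕ∞) ≤ s j ↔ Nat.count p n ≤ j := by
  induction j generalizing n with
  | zero =>
    simp only [h0, le_iInf₂_iff, Nat.cast_le, nonpos_iff_eq_zero, Nat.count_iff_forall_not]
    exact ⟨fun h m hm hp => absurd (h m hp) (not_le.mpr hm),
      fun h m hp => not_lt.mp fun hm => h m hm hp⟩
  | succ j ih =>
    have hlt : ∀ m : ℕ, s j < m ↔ j < Nat.count p m := fun m => by rw [← not_le, ih, not_le]
    simp only [hs, le_iInf₂_iff, Nat.cast_le, hlt, and_imp]
    constructor
    · intro h
      by_contra! hcount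
      obtain ⟨m, hmn, hm, hcount_m⟩ := Nat.exists_count_eq_of_lt_count hcount
      exact absurd (h m (by omega) hm) (not_le.mpr hmn)
    · intro h m hjm hm
      by_contra! hmn
      have := Nat.count_strict_mono hm hmn
      omega

lemma natCast_le_iInf_sub_one_iff {b : ℕ → Bool} (h0 : b 0 = false)
    (hb : ∀ n, b n = true → b (n + 1) = true) (n : ℕ) :
    (n : ℕ∞) ≤ (⨅ (k : ℕ) (_ : 1 ≤ k ∧ b k = true), (k : ℕ∞)) - 1 ↔ b n = false := by
  have hmono : Monotone b := monotone_nat_of_le_succ fun k => by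
    cases hk : b k
    · exact Bool.false_le _
    · rw [hb k hk]
  have hT : 1 ≤ ⨅ (k : ℕ) (_ : 1 ≤ k ∧ b k = true), (k : ℕ∞) :=
    le_iInf₂ fun k hk => Nat.one_le_cast.mpr hk.1
  rw [(ENat.addLECancellable_of_ne_top ENat.one_ne_top).le_tsub_iff_right hT, ← Nat.cast_succ]
  simp only [le_iInf₂_iff, Nat.cast_le, and_imp]
  constructor
  · intro h
    cases hbn : b n
    · rfl
    · have hn : 1 ≤ n := Nat.one_le_iff_ne_zero.mpr fun hn => by simp [hn, h0] at hbn
      exact absurd (h n hn hbn) (by omega)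
  · intro hbn k _ hbk
    by_contra! hkn
    have := hmono (Nat.le_of_lt_succ hkn)
    rw [hbn, hbk] at this
    exact absurd this (by decide)

lemma measurable_count {Ω : Type*} [MeasurableSpace Ω] {p : Ω → ℕ → Prop}
    [∀ ω, DecidablePred (p ω)] (hp : ∀ k, MeasurableSet {ω | p ω k}) (n : ℕ) :
    Measurable fun ω => Nat.count (p ω) n := by
  induction n with
  | zero => simp only [Nat.count_zero, measurable_const]
  | succ n ih =>
    simp_rw [Nat.count_succ]
    exact ih.add (Measurable.ite (hp n) measurable_const measurable_const)

lemma prod_range_one_sub_mul_indicator {α : Type*} (ε : ℝ≥0∞) (A : Set α) (y : ℕ → α)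
    [DecidablePred (y · ∈ A)] (n : ℕ) :
    ∏ m ∈ range n, (1 - ε * A.indicator (fun _ => (1 : ℝ≥0∞)) (y m)) =
      (1 - ε) ^ Nat.count (y · ∈ A) n := by
  induction n with
  | zero => simp
  | succ n ih =>
    rw [prod_range_succ, ih, Nat.count_succ, pow_add]
    by_cases h : y n ∈ A <;> simp [h]

section KilledChain

variable {S Ω Ω' : Type*} [MeasurableSpace S] [MeasurableSpace Ω] [MeasurableSpace Ω']

/-- `d n = true` records that `Z` has been killed by time `n`; while alive, `Z` moves by `K` and
survives each step with probability `χ` of its current position. -/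
def IsKilledMarkovChain (μ : Measure Ω) (K : Kernel S S) (χ : S → ℝ≥0∞) (Z : ℕ → Ω → S)
    (d : ℕ → Ω → Bool) : Prop :=
  ∀ (n : ℕ) (g : S → ℝ≥0∞) (h : (Fin (n + 1) → S) → ℝ≥0∞), Measurable g → Measurable h →
    ∫⁻ ω, (if d n ω = false ∧ d (n + 1) ω = false then g (Z (n + 1) ω) else 0) *
        h (fun i => Z i ω) ∂μ =
      ∫⁻ ω, (if d n ω = false then χ (Z n ω) * ∫⁻ y, g y ∂(K (Z n ω)) else 0) *
        h (fun i => Z i ω) ∂μ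

def IsMarkovChain (μ : Measure Ω) (K : Kernel S S) (Y : ℕ → Ω → S) : Prop :=
  ∀ (n : ℕ) (g : S → ℝ≥0∞) (h : (Fin (n + 1) → S) → ℝ≥0∞), Measurable g → Measurable h →
    ∫⁻ ω, g (Y (n + 1) ω) * h (fun i => Y i ω) ∂μ =
      ∫⁻ ω, (∫⁻ y, g y ∂(K (Y n ω))) * h (fun i => Y i ω) ∂μ

variable {μ : Measure Ω} {μ' : Measure Ω'} {K : Kernel S S} {χ : S → ℝ≥0∞} {Z : ℕ → Ω → S}
  {d : ℕ → Ω → Bool} {Y : ℕ → Ω' → S}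

lemma IsKilledMarkovChain.lintegral_alive_succ (hZ : IsKilledMarkovChain μ K χ Z d)
    (habs : ∀ᵐ ω ∂μ, ∀ n, d n ω = true → d (n + 1) ω = true) (n : ℕ) {u : S → ℝ≥0∞}
    (hu : Measurable u) :
    ∫⁻ ω, (if d (n + 1) ω = false then u (Z (n + 1) ω) else 0) ∂μ =
      ∫⁻ ω, (if d n ω = false then χ (Z n ω) * ∫⁻ y, u y ∂(K (Z n ω)) else 0) ∂μ := by
  have hstep := hZ n u (fun _ => 1) hu measurable_const
  simp only [mul_one] at hstep
  rw [← hstep]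
  refine lintegral_congr_ae (habs.mono fun ω hω => ?_)
  by_cases h : d (n + 1) ω = false
  · have hn : d n ω = false := by
      cases hdn : d n ω
      · rfl
      · simp [hω n hdn] at h
    simp [h, hn]
  · simp [h]

lemma IsKilledMarkovChain.lintegral_alive_eq [IsProbabilityMeasure μ] [IsProbabilityMeasure μ']
    (hZ : IsKilledMarkovChain μ K χ Z d) (hY : IsMarkovChain μ' K Y) (hχ : Measurable χ)
    {z : S} (hZ0 : ∀ᵐ ω ∂μ, Z 0 ω = z ∧ d 0 ω = false) (hY0 : ∀ᵐ ω ∂μ', Y 0 ω = z)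
    (habs : ∀ᵐ ω ∂μ, ∀ n, d n ω = true → d (n + 1) ω = true) (n : ℕ) {u : S → ℝ≥0∞}
    (hu : Measurable u) :
    ∫⁻ ω, (if d n ω = false then u (Z n ω) else 0) ∂μ =
      ∫⁻ ω, (∏ m ∈ range n, χ (Y m ω)) * u (Y n ω) ∂μ' := by
  induction n generalizing u with
  | zero =>
    have hL : ∀ᵐ ω ∂μ, (if d 0 ω = false then u (Z 0 ω) else 0) = u z :=
      hZ0.mono fun ω ⟨hz, hd⟩ => by simp [hz, hd]
    have hR : ∀ᵐ ω ∂μ', (∏ m ∈ range 0, χ (Y m ω)) * u (Y 0 ω) = u z :=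
      hY0.mono fun ω hz => by simp [hz]
    simp only [lintegral_congr_ae hL, lintegral_congr_ae hR, lintegral_const, measure_univ]
  | succ n ih =>
    have hprod : Measurable fun p : Fin (n + 1) → S => ∏ m, χ (p m) := by fun_prop
    calc _ = ∫⁻ ω, (if d n ω = false then χ (Z n ω) * ∫⁻ y, u y ∂(K (Z n ω)) else 0) ∂μ :=
          hZ.lintegral_alive_succ habs n hu
      _ = ∫⁻ ω, (∏ m ∈ range n, χ (Y m ω)) * (χ (Y n ω) * ∫⁻ y, u y ∂(K (Y n ω))) ∂μ' :=
          ih (hχ.mul hu.lintegral_kernel)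
      _ = ∫⁻ ω, (∫⁻ y, u y ∂(K (Y n ω))) * ∏ m : Fin (n + 1), χ (Y m ω) ∂μ' :=
          lintegral_congr fun ω => by
            rw [Fin.prod_univ_eq_prod_range (fun m => χ (Y m ω)), prod_range_succ]
            ring
      _ = ∫⁻ ω, u (Y (n + 1) ω) * ∏ m : Fin (n + 1), χ (Y m ω) ∂μ' :=
          (hY n u _ hu hprod).symm
      _ = _ := lintegral_congr fun ω => by
          rw [Fin.prod_univ_eq_prod_range (fun m => χ (Y m ω)), mul_comm]

lemma IsKilledMarkovChain.measure_alive_eq [IsProbabilityMeasure μ] [IsProbabilityMeasure μ']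
    (hZ : IsKilledMarkovChain μ K χ Z d) (hY : IsMarkovChain μ' K Y) (hχ : Measurable χ)
    {z : S} (hZ0 : ∀ᵐ ω ∂μ, Z 0 ω = z ∧ d 0 ω = false) (hY0 : ∀ᵐ ω ∂μ', Y 0 ω = z)
    (habs : ∀ᵐ ω ∂μ, ∀ n, d n ω = true → d (n + 1) ω = true)
    (hd : ∀ n, Measurable (d n)) (n : ℕ) :
    μ {ω | d n ω = false} = ∫⁻ ω, ∏ m ∈ range n, χ (Y m ω) ∂μ' := by
  have h := hZ.lintegral_alive_eq hY hχ hZ0 hY0 habs n (u := 1) measurable_const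
  simp only [Pi.one_apply, mul_one] at h
  have hs : MeasurableSet {ω | d n ω = false} := hd n (measurableSet_singleton false)
  rw [← h, ← lintegral_indicator_one hs]
  simp only [Set.indicator_apply, Set.mem_ofPred_eq, Pi.one_apply]

lemma IsKilledMarkovChain.measure_alive_eq_tsum [IsProbabilityMeasure μ] [IsProbabilityMeasure μ']
    {ε : ℝ≥0∞} (hε0 : 0 < ε) (hε1 : ε ≤ 1) {A : Set S} (hA : MeasurableSet A)
    (hZ : IsKilledMarkovChain μ K (fun z => 1 - ε * A.indicator (fun _ => 1) z) Z d)
    (hY : IsMarkovChain μ' K Y) (hYm : ∀ n, Measurable (Y n))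
    {z : S} (hZ0 : ∀ᵐ ω ∂μ, Z 0 ω = z ∧ d 0 ω = false) (hY0 : ∀ᵐ ω ∂μ', Y 0 ω = z)
    (habs : ∀ᵐ ω ∂μ, ∀ n, d n ω = true → d (n + 1) ω = true)
    (hd : ∀ n, Measurable (d n)) [∀ ω, DecidablePred (Y · ω ∈ A)] (n : ℕ) :
    μ {ω | d n ω = false} =
      ε * ∑' j : ℕ, (1 - ε) ^ j * μ' {ω | Nat.count (Y · ω ∈ A) n ≤ j} := by
  have hχ : Measurable fun z => 1 - ε * A.indicator (fun _ => (1 : ℝ≥0∞)) z := by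
    fun_prop (disch := exact hA)
  have hq : 1 - ε < 1 := ENNReal.sub_lt_self ENNReal.one_ne_top one_ne_zero hε0.ne'
  rw [hZ.measure_alive_eq hY hχ hZ0 hY0 habs hd n]
  simp_rw [prod_range_one_sub_mul_indicator]
  rw [lintegral_pow_eq_one_sub_mul_tsum hq (measurable_count (fun k => hYm k hA) n),
    ENNReal.sub_sub_cancel ENNReal.one_ne_top hε1]

end KilledChain

theorem coupling_time_moment_identity_general {X : Type*} [MeasurableSpace X]
    (Pc : Kernel (X × X) (X × X))
    (C : Set X) (hC : MeasurableSet C)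
    (ε : ℝ≥0∞) (hε0 : 0 < ε) (hε1 : ε < 1)
    (x x' : X)
    -- the extended chain `(X̃_n, X̃'_n, d_n)` on a probability space `Ω̃`
    {Ωt : Type*} [MeasurableSpace Ωt] (μt : Measure Ωt) [IsProbabilityMeasure μt]
    (Xt X't : ℕ → Ωt → X) (d : ℕ → Ωt → Bool)
    (hdm : ∀ n, Measurable (d n))
    (hinit_t : ∀ᵐ ω ∂μt, Xt 0 ω = x ∧ X't 0 ω = x' ∧ d 0 ω = false)
    (habs : ∀ᵐ ω ∂μt, ∀ n, d n ω = true → d (n + 1) ω = true)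
    (hdyn : ∀ (n : ℕ) (g : X × X → ℝ≥0∞) (h : (Fin (n + 1) → X × X) → ℝ≥0∞),
      Measurable g → Measurable h →
      ∫⁻ ω, (if d n ω = false ∧ d (n + 1) ω = false then
          g (Xt (n + 1) ω, X't (n + 1) ω) else 0) *
          h (fun i => (Xt i ω, X't i ω)) ∂μt =
      ∫⁻ ω, (if d n ω = false then
          (1 - ε * Set.indicator (C ×ˢ C) (fun _ => (1 : ℝ≥0∞)) (Xt n ω, X't n ω)) *
          ∫⁻ y, g y ∂(Pc (Xt n ω, X't n ω)) else 0) *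
          h (fun i => (Xt i ω, X't i ω)) ∂μt)
    -- the bivariate chain `(X̌_n, X̌'_n)` with kernel `P̌` on a probability space `Ω̌`
    {Ωc : Type*} [MeasurableSpace Ωc] (μc : Measure Ωc) [IsProbabilityMeasure μc]
    (Yc Y'c : ℕ → Ωc → X)
    (hYm : ∀ n, Measurable (Yc n)) (hY'm : ∀ n, Measurable (Y'c n))
    (hinit_c : ∀ᵐ ω ∂μc, Yc 0 ω = x ∧ Y'c 0 ω = x')
    (hmarkov_c : ∀ (n : ℕ) (g : X × X → ℝ≥0∞) (h : (Fin (n + 1) → X × X) → ℝ≥0∞),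
      Measurable g → Measurable h →
      ∫⁻ ω, g (Yc (n + 1) ω, Y'c (n + 1) ω) * h (fun i => (Yc i ω, Y'c i ω)) ∂μc =
      ∫⁻ ω, (∫⁻ y, g y ∂(Pc (Yc n ω, Y'c n ω))) * h (fun i => (Yc i ω, Y'c i ω)) ∂μc)
    -- the coupling time of the extended chain
    (T : Ωt → ℕ∞)
    (hT : ∀ ω, T ω = ⨅ (k : ℕ) (_ : 1 ≤ k ∧ d k ω = true), (k : ℕ∞))
    -- the successive hitting times of `C × C` by the bivariate chain
    (σ : ℕ → Ωc → ℕ∞)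
    (hσ0 : ∀ ω, σ 0 ω = ⨅ (n : ℕ) (_ : (Yc n ω, Y'c n ω) ∈ C ×ˢ C), (n : ℕ∞))
    (hσs : ∀ (j : ℕ) (ω : Ωc), σ (j + 1) ω =
      ⨅ (n : ℕ) (_ : σ j ω < (n : ℕ∞) ∧ (Yc n ω, Y'c n ω) ∈ C ×ˢ C), (n : ℕ∞))
    (r : ℕ → ℝ) (hr : Subgeometric r) :
    ∫⁻ ω, rext r (T ω - 1) ∂μt =
      ε * ∑' j : ℕ, (1 - ε) ^ j * ∫⁻ ω, rext r (σ j ω) ∂μc := by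
  classical
  obtain ⟨-, hrm, -, -⟩ := hr
  let visits (ω : Ωc) (k : ℕ) : Prop := (Yc k ω, Y'c k ω) ∈ C ×ˢ C
  have hσ (j n : ℕ) : {ω | (n : ℕ∞) ≤ σ j ω} = {ω | Nat.count (visits ω) n ≤ j} :=
    Set.ext fun ω =>
      natCast_le_iff_count_le_of_iterated_hitting (s := (σ · ω)) (hσ0 ω) (hσs · ω) j n
  have hσm (j n : ℕ) : MeasurableSet {ω | (n : ℕ∞) ≤ σ j ω} := by
    rw [hσ]
    exact measurable_count (fun k => (hYm k).prodMk (hY'm k) (hC.prod hC)) n measurableSet_Iic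
  have hT' (n : ℕ) : {ω | (n : ℕ∞) ≤ T ω - 1} =ᵐ[μt] {ω | d n ω = false} := by
    refine eventuallyEq_set.mpr ?_
    filter_upwards [hinit_t, habs] with ω hω0 hωabs
    rw [hT ω]
    exact natCast_le_iInf_sub_one_iff hω0.2.2 hωabs n
  have hkilled : IsKilledMarkovChain μt Pc (fun z => 1 - ε * (C ×ˢ C).indicator (fun _ => 1) z)
      (fun n ω => (Xt n ω, X't n ω)) d := hdyn
  have halive := hkilled.measure_alive_eq_tsum (Y := fun n ω => (Yc n ω, Y'c n ω)) hε0 hε1.le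
    (hC.prod hC) hmarkov_c (fun n => (hYm n).prodMk (hY'm n))
    (hinit_t.mono fun ω h => ⟨by rw [h.1, h.2.1], h.2.2⟩)
    (hinit_c.mono fun ω h => by rw [h.1, h.2]) habs hdm
  rw [lintegral_rext_eq_tsum hrm fun n =>
    (hdm n (measurableSet_singleton false)).nullMeasurableSet.congr (hT' n).symm]
  simp_rw [lintegral_rext_eq_tsum hrm fun n => (hσm _ n).nullMeasurableSet, hσ,
    measure_congr (hT' _), halive, ← ENNReal.tsum_mul_left]
  rw [ENNReal.tsum_comm]
  exact tsum_congr fun n => tsum_congr fun j => by ring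

/-- The distributional identity for the coupling time:
`Ẽ_{x,x',0}[r(T−1)] = ε ∑_{j≥0} (1−ε)^j Ě_{x,x'}[r(σ_j)]`, where `σ_j` is the `(j+1)`-th
visit of the bivariate chain to `C × C` and `T` the coupling time of the extended chain. -/
theorem coupling_time_moment_identity {X : Type*} [MeasurableSpace X]
    (Pc : Kernel (X × X) (X × X)) [IsMarkovKernel Pc]
    (C : Set X) (hC : MeasurableSet C)
    (ν : Measure X) [IsProbabilityMeasure ν]
    (P : Kernel X X) [IsMarkovKernel P]
    (ε : ℝ≥0∞) (hε0 : 0 < ε) (hε1 : ε < 1)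
    (hminor : ∀ y ∈ C, ε • ν ≤ P y)
    (x x' : X)
    -- the extended chain `(X̃_n, X̃'_n, d_n)` on a probability space `Ω̃`
    {Ωt : Type*} [MeasurableSpace Ωt] (μt : Measure Ωt) [IsProbabilityMeasure μt]
    (Xt X't : ℕ → Ωt → X) (d : ℕ → Ωt → Bool)
    (hXtm : ∀ n, Measurable (Xt n)) (hX'tm : ∀ n, Measurable (X't n))
    (hdm : ∀ n, Measurable (d n))
    (hinit_t : ∀ᵐ ω ∂μt, Xt 0 ω = x ∧ X't 0 ω = x' ∧ d 0 ω = false)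
    (habs : ∀ᵐ ω ∂μt, ∀ n, d n ω = true → d (n + 1) ω = true)
    (hdyn : ∀ (n : ℕ) (g : X × X → ℝ≥0∞) (h : (Fin (n + 1) → X × X) → ℝ≥0∞),
      Measurable g → Measurable h →
      ∫⁻ ω, (if d n ω = false ∧ d (n + 1) ω = false then
          g (Xt (n + 1) ω, X't (n + 1) ω) else 0) *
          h (fun i => (Xt i ω, X't i ω)) ∂μt =
      ∫⁻ ω, (if d n ω = false then
          (1 - ε * Set.indicator (C ×ˢ C) (fun _ => (1 : ℝ≥0∞)) (Xt n ω, X't n ω)) *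
          ∫⁻ y, g y ∂(Pc (Xt n ω, X't n ω)) else 0) *
          h (fun i => (Xt i ω, X't i ω)) ∂μt)
    -- the bivariate chain `(X̌_n, X̌'_n)` with kernel `P̌` on a probability space `Ω̌`
    {Ωc : Type*} [MeasurableSpace Ωc] (μc : Measure Ωc) [IsProbabilityMeasure μc]
    (Yc Y'c : ℕ → Ωc → X)
    (hYm : ∀ n, Measurable (Yc n)) (hY'm : ∀ n, Measurable (Y'c n))
    (hinit_c : ∀ᵐ ω ∂μc, Yc 0 ω = x ∧ Y'c 0 ω = x')
    (hmarkov_c : ∀ (n : ℕ) (g : X × X → ℝ≥0∞) (h : (Fin (n + 1) → X × X) → ℝ≥0∞),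
      Measurable g → Measurable h →
      ∫⁻ ω, g (Yc (n + 1) ω, Y'c (n + 1) ω) * h (fun i => (Yc i ω, Y'c i ω)) ∂μc =
      ∫⁻ ω, (∫⁻ y, g y ∂(Pc (Yc n ω, Y'c n ω))) * h (fun i => (Yc i ω, Y'c i ω)) ∂μc)
    -- the coupling time of the extended chain
    (T : Ωt → ℕ∞)
    (hT : ∀ ω, T ω = ⨅ (k : ℕ) (_ : 1 ≤ k ∧ d k ω = true), (k : ℕ∞))
    -- the successive hitting times of `C × C` by the bivariate chain
    (σ : ℕ → Ωc → ℕ∞)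
    (hσ0 : ∀ ω, σ 0 ω = ⨅ (n : ℕ) (_ : (Yc n ω, Y'c n ω) ∈ C ×ˢ C), (n : ℕ∞))
    (hσs : ∀ (j : ℕ) (ω : Ωc), σ (j + 1) ω =
      ⨅ (n : ℕ) (_ : σ j ω < (n : ℕ∞) ∧ (Yc n ω, Y'c n ω) ∈ C ×ˢ C), (n : ℕ∞))
    (r : ℕ → ℝ) (hr : Subgeometric r) :
    ∫⁻ ω, rext r (T ω - 1) ∂μt =
      ε * ∑' j : ℕ, (1 - ε) ^ j * ∫⁻ ω, rext r (σ j ω) ∂μc :=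
  coupling_time_moment_identity_general Pc C hC ε hε0 hε1 x x' μt Xt X't d hdm hinit_t habs hdyn μc
    Yc Y'c hYm hY'm hinit_c hmarkov_c T hT σ hσ0 hσs r hr
end
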